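/- arXiv:2512.10024 — 5 statements merged into one kernel-verified Lean document; each statement's English description precedes it below -/
import Mathlib

section
/- Let φ be a bijective antimorphism of the free monoid satisfying φ(φ(a)) = a for every letter a. If A·P·Q·φ(A)·X = R·Y for palindromes P, Q, R and words A, X, Y, then there exist palindromes S, T, U and a word Z such that one of the following holds: (1) X = Z·S·T·φ(Z)·U·Y; (2) X = S·Z·T·U·φ(Z)·Y; (3) Y = Z·S·T·φ(Z)·U·X; (4) Y = S·Z·T·U·φ(Z)·X. -/
def Pal {α : Type*} (w : List α) : Prop := w.reverse = w

noncomputable def palLen {α : Type*} (w : List α) : ℕ :=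
  sInf {k | ∃ l : List (List α), l.length = k ∧ (∀ p ∈ l, Pal p) ∧ l.flatten = w}

namespace Pal14

variable {α : Type*}

lemma pal_nil : Pal ([] : List α) := rfl

lemma split {x y u v : List α} (h : x ++ y = u ++ v) :
    (∃ m, u = x ++ m ∧ y = m ++ v) ∨ (∃ m, x = u ++ m ∧ v = m ++ y) :=
  List.append_eq_append_iff.mp h

lemma pal_append_eq {x y : List α} (h : Pal (x ++ y)) :
    x ++ y = y.reverse ++ x.reverse := by
  conv_lhs => rw [← h]
  rw [List.reverse_append]

lemma pal_of_two {u x m : List α} (e1 : u.reverse = x ++ m) (e2 : u = m ++ x.reverse) :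
    Pal m := by
  have h1 : u = m.reverse ++ x.reverse := by
    rw [← List.reverse_reverse u, e1, List.reverse_append]
  have h2 : m ++ x.reverse = m.reverse ++ x.reverse := e2.symm.trans h1
  exact (List.append_cancel_right h2).symm

lemma pal_of_two' {x y m : List α} (e1 : x = y.reverse ++ m) (e2 : x.reverse = m ++ y) :
    Pal m := by
  have h1 : x.reverse = m.reverse ++ y := by
    rw [e1, List.reverse_append, List.reverse_reverse]
  have h2 : m ++ y = m.reverse ++ y := e2.symm.trans h1
  exact (List.append_cancel_right h2).symm

lemma pal_mid {u h : List α} (hp : Pal (u ++ h ++ u.reverse)) : Pal h := by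
  have hp' : (u ++ h ++ u.reverse).reverse = u ++ h ++ u.reverse := hp
  have h1 : u ++ (h.reverse ++ u.reverse) = u ++ (h ++ u.reverse) := by
    simpa [List.reverse_append, List.append_assoc] using hp'
  exact List.append_cancel_right (List.append_cancel_left h1)

def phi (f : α → α) (w : List α) : List α := (w.map f).reverse

lemma phi_append (f : α → α) (x y : List α) :
    phi f (x ++ y) = phi f y ++ phi f x := by
  simp [phi]

@[simp] lemma phi_nil (f : α → α) : phi f ([] : List α) = [] := rfl

@[simp] lemma length_phi (f : α → α) (w : List α) : (phi f w).length = w.length := by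
  simp [phi]

lemma phi_reverse (f : α → α) (w : List α) : phi f w.reverse = (phi f w).reverse := by
  simp [phi, List.map_reverse]

lemma phi_phi {f : α → α} (hf : ∀ a, f (f a) = a) (w : List α) :
    phi f (phi f w) = w := by
  have hid : f ∘ f = id := funext hf
  simp [phi, List.map_reverse, List.map_map, hid]

lemma phi_rev_phi {f : α → α} (hf : ∀ a, f (f a) = a) (w : List α) :
    phi f (phi f w).reverse = w.reverse := by
  rw [phi_reverse, phi_phi hf]

lemma phi_pal {f : α → α} {w : List α} (h : Pal w) : Pal (phi f w) := by
  show (phi f w).reverse = phi f w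
  unfold phi
  rw [List.reverse_reverse, ← List.map_reverse, h]

def Form1 (f : α → α) (w : List α) : Prop :=
  ∃ Z S T U, Pal S ∧ Pal T ∧ Pal U ∧ w = Z ++ S ++ T ++ phi f Z ++ U

def Form2 (f : α → α) (w : List α) : Prop :=
  ∃ Z S T U, Pal S ∧ Pal T ∧ Pal U ∧ w = S ++ Z ++ T ++ U ++ phi f Z

def InN (f : α → α) (w : List α) : Prop := Form1 f w ∨ Form2 f w

lemma inN_nil (f : α → α) : InN f ([] : List α) :=
  Or.inl ⟨[], [], [], [], pal_nil, pal_nil, pal_nil, rfl⟩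

def FF (A B : List α) : Prop :=
  (∃ Z S A₀, Pal S ∧ Pal A₀ ∧ B = Z ++ S ∧ A = A₀ ++ Z) ∨
  (∃ Z S A₁, Pal S ∧ Pal A₁ ∧ B = S ++ Z ∧ A = Z ++ A₁) ∨
  (∃ S T, Pal S ∧ Pal T ∧ B = S ++ A ++ T) ∨
  (∃ S T, Pal S ∧ Pal T ∧ A = S ++ B ++ T)

lemma KLstar : ∀ n (A P₁ P₂ : List α), P₁.length = n → Pal (A ++ P₁) → Pal (P₁ ++ P₂) →
    FF A P₂ := by
  intro n
  induction n using Nat.strong_induction_on with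
  | _ n ih =>
  intro A P₁ P₂ hn hA hP
  rcases split (pal_append_eq hA) with ⟨C, e1, e2⟩ | ⟨A₁, e1, e2⟩
  · -- e1 : P₁.reverse = A ++ C, e2 : P₁ = C ++ A.reverse
    have hC : Pal C := pal_of_two e1 e2
    rcases split (pal_append_eq hP) with ⟨D, g1, g2⟩ | ⟨E, g1, g2⟩
    · -- g1 : P₂.reverse = P₁ ++ D, g2 : P₂ = D ++ P₁.reverse
      have hD : Pal D := pal_of_two g1 g2
      refine Or.inr (Or.inr (Or.inl ⟨D, C, hD, hC, ?_⟩))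
      rw [g2, e1, List.append_assoc]
    · -- g1 : P₁ = P₂.reverse ++ E, g2 : P₁.reverse = E ++ P₂
      have hE : Pal E := pal_of_two' g1 g2
      have h2 : A ++ C = E ++ P₂ := e1.symm.trans g2
      rcases split h2 with ⟨g, f1, f2⟩ | ⟨g, f1, f2⟩
      · -- f1 : E = A ++ g, f2 : C = g ++ P₂  (recursion)
        by_cases hz : A.length + P₂.length = 0
        · have hA0 : A = [] := List.length_eq_zero_iff.mp (by omega)
          have hP0 : P₂ = [] := List.length_eq_zero_iff.mp (by omega)
          exact Or.inl ⟨[], [], [], pal_nil, pal_nil, by simp [hP0], by simp [hA0]⟩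
        · have l1 := congrArg List.length e1
          have l2 := congrArg List.length f2
          simp only [List.length_append, List.length_reverse] at l1 l2
          refine ih g.length (by omega) A g P₂ rfl ?_ ?_
          · rw [← f1]; exact hE
          · rw [← f2]; exact hC
      · -- f1 : A = E ++ g, f2 : P₂ = g ++ C  (F1)
        exact Or.inl ⟨g, C, E, hC, hE, f2, f1⟩
  · -- e1 : A = P₁.reverse ++ A₁, e2 : A.reverse = A₁ ++ P₁
    have hA₁ : Pal A₁ := pal_of_two' e1 e2
    rcases split (pal_append_eq hP) with ⟨D, g1, g2⟩ | ⟨E, g1, g2⟩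
    · -- F2
      have hD : Pal D := pal_of_two g1 g2
      exact Or.inr (Or.inl ⟨P₁.reverse, D, A₁, hD, hA₁, g2, e1⟩)
    · -- F4
      have hE : Pal E := pal_of_two' g1 g2
      refine Or.inr (Or.inr (Or.inr ⟨E, A₁, hE, hA₁, ?_⟩))
      rw [e1, g1, List.reverse_append, List.reverse_reverse, hE, List.append_assoc]

lemma twoPal {A K : List α} (h1 : Pal (A ++ K)) (h2 : Pal K) :
    ∃ s t, Pal s ∧ Pal t ∧ A = s ++ t := by
  have := KLstar K.length A K [] rfl h1 (by simpa using h2)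
  rcases this with ⟨Z, S, A₀, hS, hA₀, hB, hA⟩ | ⟨Z, S, A₁, hS, hA₁, hB, hA⟩ |
    ⟨S, T, hS, hT, hB⟩ | ⟨S, T, hS, hT, hA⟩
  · rcases List.append_eq_nil_iff.mp hB.symm with ⟨rfl, rfl⟩
    exact ⟨A₀, [], hA₀, pal_nil, by simpa using hA⟩
  · rcases List.append_eq_nil_iff.mp hB.symm with ⟨rfl, rfl⟩
    exact ⟨A₁, [], hA₁, pal_nil, by simpa using hA⟩
  · rcases List.append_eq_nil_iff.mp hB.symm with ⟨h, rfl⟩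
    rcases List.append_eq_nil_iff.mp h with ⟨rfl, rfl⟩
    exact ⟨[], [], pal_nil, pal_nil, rfl⟩
  · exact ⟨S, T, hS, hT, by simpa using hA⟩

lemma dispatch {f : α → α} {A B G : List α} (hF : FF A B) (hG : Pal G) :
    InN f (B ++ G ++ phi f A) := by
  rcases hF with ⟨Z, S, A₀, hS, hA₀, hB, hA⟩ | ⟨Z, S, A₁, hS, hA₁, hB, hA⟩ |
    ⟨S, T, hS, hT, hB⟩ | ⟨S, T, hS, hT, hA⟩
  · refine Or.inl ⟨Z, S, G, phi f A₀, hS, hG, phi_pal hA₀, ?_⟩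
    rw [hB, hA, phi_append]
    simp [List.append_assoc]
  · refine Or.inr ⟨Z, S, G, phi f A₁, hS, hG, phi_pal hA₁, ?_⟩
    rw [hB, hA, phi_append]
    simp [List.append_assoc]
  · refine Or.inr ⟨A, S, T, G, hS, hT, hG, ?_⟩
    rw [hB]
  · refine Or.inl ⟨B, G, phi f T, phi f S, hG, phi_pal hT, phi_pal hS, ?_⟩
    rw [hA, phi_append, phi_append]
    simp [List.append_assoc]

lemma HL {f : α → α} : ∀ n (A K Q₂ P₂ : List α), K.length + P₂.length = n →
    Pal (A ++ K) → Pal (K ++ Q₂ ++ P₂) → Pal P₂ → InN f (Q₂ ++ phi f A) := by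
  intro n
  induction n using Nat.strong_induction_on with
  | _ n ih =>
  intro A K Q₂ P₂ hn hAK hKQP hP₂
  obtain ⟨t, u, ht, hu, htu⟩ : ∃ t u, Pal t ∧ Pal u ∧ K ++ Q₂ = t ++ u :=
    twoPal hKQP hP₂
  rcases split htu with ⟨t₂, e1, e2⟩ | ⟨K₂, e1, e2⟩
  · -- e1 : t = K ++ t₂, e2 : Q₂ = t₂ ++ u
    have hF : FF A t₂ := KLstar K.length A K t₂ rfl hAK (by rw [← e1]; exact ht)
    rw [e2]
    exact dispatch hF hu
  · -- e1 : K = t ++ K₂, e2 : u = K₂ ++ Q₂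
    have hF : FF (A ++ t) Q₂ := KLstar K₂.length (A ++ t) K₂ Q₂ rfl
      (by rw [List.append_assoc, ← e1]; exact hAK) (by rw [← e2]; exact hu)
    rcases hF with ⟨Z, S, A₀, hS, hA₀, hB, hA⟩ | ⟨Z, S, A₁, hS, hA₁, hB, hA⟩ |
      ⟨S, T, hS, hT, hB⟩ | ⟨S, T, hS, hT, hA⟩
    · -- F1 : hB : Q₂ = Z ++ S, hA : A ++ t = A₀ ++ Z
      rcases split hA with ⟨m, f1, f2⟩ | ⟨m, f1, f2⟩
      · -- f1 : A₀ = A ++ m, f2 : t = m ++ Z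
        have hF2 : FF A Z := KLstar m.length A m Z rfl (by rw [← f1]; exact hA₀)
          (by rw [← f2]; exact ht)
        rw [hB]
        exact dispatch hF2 hS
      · -- f1 : A = A₀ ++ m, f2 : Z = m ++ t
        refine Or.inl ⟨m, t, S, phi f A₀, ht, hS, phi_pal hA₀, ?_⟩
        rw [hB, f2, f1, phi_append]
        simp [List.append_assoc]
    · -- F2 : hB : Q₂ = S ++ Z, hA : A ++ t = Z ++ A₁
      rcases split hA with ⟨m, f1, f2⟩ | ⟨m, f1, f2⟩
      · -- f1 : Z = A ++ m, f2 : t = m ++ A₁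
        obtain ⟨a, b, ha, hb, hab⟩ := twoPal (A := m) (K := A₁) (by rw [← f2]; exact ht) hA₁
        refine Or.inr ⟨A, S, a, b, hS, ha, hb, ?_⟩
        rw [hB, f1, hab]
        simp [List.append_assoc]
      · -- f1 : A = Z ++ m, f2 : A₁ = m ++ t
        obtain ⟨a, b, ha, hb, hab⟩ := twoPal (A := m) (K := t) (by rw [← f2]; exact hA₁) ht
        refine Or.inr ⟨Z, S, phi f b, phi f a, hS, phi_pal hb, phi_pal ha, ?_⟩
        rw [hB, f1, hab, phi_append, phi_append]
        simp [List.append_assoc]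
    · -- F3 : hB : Q₂ = S ++ (A ++ t) ++ T
      refine Or.inr ⟨A, S, t, T, hS, ht, hT, ?_⟩
      rw [hB]
      simp [List.append_assoc]
    · -- F4 : hA : A ++ t = S ++ Q₂ ++ T
      rw [List.append_assoc] at hA
      rcases split hA with ⟨m, f1, f2⟩ | ⟨m, f1, f2⟩
      · -- f1 : S = A ++ m, f2 : t = m ++ (Q₂ ++ T) : recursion
        by_cases hs : Q₂.length + K₂.length + P₂.length = 0
        · have hQ0 : Q₂ = [] := List.length_eq_zero_iff.mp (by omega)
          have hK2 : K₂ = [] := List.length_eq_zero_iff.mp (by omega)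
          have hKt : K = t := by rw [e1, hK2, List.append_nil]
          obtain ⟨s', t', hs', ht', hA'⟩ := twoPal hAK (by rw [hKt]; exact ht)
          refine Or.inl ⟨[], phi f t', phi f s', [], phi_pal ht', phi_pal hs', pal_nil, ?_⟩
          rw [hQ0, hA', phi_append]
          simp
        · have l2 := congrArg List.length f2
          have l3 := congrArg List.length e1
          simp only [List.length_append] at l2 l3
          exact ih (m.length + T.length) (by omega) A m Q₂ T rfl
            (by rw [← f1]; exact hS) (by rw [List.append_assoc, ← f2]; exact ht) hT
      · -- f1 : A = S ++ m, f2 : Q₂ ++ T = m ++ t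
        rcases split f2 with ⟨k, g1, g2⟩ | ⟨k, g1, g2⟩
        · -- g1 : m = Q₂ ++ k, g2 : T = k ++ t
          obtain ⟨a, b, ha, hb, hab⟩ := twoPal (A := k) (K := t) (by rw [← g2]; exact hT) ht
          refine Or.inl ⟨Q₂, phi f b, phi f a, phi f S, phi_pal hb, phi_pal ha, phi_pal hS, ?_⟩
          rw [f1, g1, hab, phi_append, phi_append, phi_append]
          simp [List.append_assoc]
        · -- g1 : Q₂ = m ++ k, g2 : t = k ++ T
          obtain ⟨a, b, ha, hb, hab⟩ := twoPal (A := k) (K := T) (by rw [← g2]; exact ht) hT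
          refine Or.inl ⟨m, a, b, phi f S, ha, hb, phi_pal hS, ?_⟩
          rw [f1, g1, hab, phi_append]
          simp [List.append_assoc]

lemma KL2 {f : α → α} : ∀ n (A P Q₁ Q₂ : List α), Q₁.length = n → Pal P →
    Pal (A ++ P ++ Q₁) → Pal (Q₁ ++ Q₂) → InN f (Q₂ ++ phi f A) := by
  intro n
  induction n using Nat.strong_induction_on with
  | _ n ih =>
  intro A P Q₁ Q₂ hn hP hR hQ
  have hP' : P.reverse = P := hP
  have hReq : (A ++ P) ++ Q₁ = Q₁.reverse ++ (P ++ A.reverse) := by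
    have h0 := pal_append_eq (x := A ++ P) (y := Q₁) hR
    rw [List.reverse_append, hP'] at h0
    exact h0
  rcases split hReq with ⟨m, e1, e2⟩ | ⟨m, e1, e2⟩
  · -- e1 : Q₁.reverse = (A ++ P) ++ m, e2 : Q₁ = m ++ (P ++ A.reverse)
    have h1 : Q₁ = m.reverse ++ (P ++ A.reverse) := by
      rw [← List.reverse_reverse Q₁, e1]
      simp [List.reverse_append, hP', List.append_assoc]
    have hK : Pal m := (List.append_cancel_right (e2.symm.trans h1)).symm
    rcases split (pal_append_eq hQ) with ⟨D, g1, g2⟩ | ⟨E, g1, g2⟩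
    · -- g1 : Q₂.reverse = Q₁ ++ D, g2 : Q₂ = D ++ Q₁.reverse
      have hD : Pal D := pal_of_two g1 g2
      refine Or.inr ⟨A, D, P, m, hD, hP, hK, ?_⟩
      rw [g2, e1]
      simp [List.append_assoc]
    · -- g1 : Q₁ = Q₂.reverse ++ E, g2 : Q₁.reverse = E ++ Q₂
      have hE : Pal E := pal_of_two' g1 g2
      have h2 : E ++ Q₂ = (A ++ P) ++ m := g2.symm.trans e1
      rcases split h2 with ⟨j, f1, f2⟩ | ⟨j, f1, f2⟩
      · -- f1 : A ++ P = E ++ j, f2 : Q₂ = j ++ m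
        rcases split f1 with ⟨k, p1, p2⟩ | ⟨k, p1, p2⟩
        · -- p1 : E = A ++ k, p2 : P = k ++ j
          have hF : FF A j := KLstar k.length A k j rfl (by rw [← p1]; exact hE)
            (by rw [← p2]; exact hP)
          rw [f2]
          exact dispatch hF hK
        · -- p1 : A = E ++ k, p2 : j = k ++ P
          refine Or.inl ⟨k, P, m, phi f E, hP, hK, phi_pal hE, ?_⟩
          rw [f2, p2, p1, phi_append]
          simp [List.append_assoc]
      · -- f1 : E = (A ++ P) ++ j, f2 : m = j ++ Q₂ : recursion
        by_cases hz : A.length + P.length + Q₂.length = 0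
        · have hA0 : A = [] := List.length_eq_zero_iff.mp (by omega)
          have hQ0 : Q₂ = [] := List.length_eq_zero_iff.mp (by omega)
          rw [hA0, hQ0]
          simpa using inN_nil f
        · have l1 := congrArg List.length e2
          have l2 := congrArg List.length f2
          simp only [List.length_append, List.length_reverse] at l1 l2
          exact ih j.length (by omega) A P j Q₂ rfl hP (by rw [← f1]; exact hE)
            (by rw [← f2]; exact hK)
  · -- e1 : A ++ P = Q₁.reverse ++ m, e2 : P ++ A.reverse = m ++ Q₁
    rcases split e1 with ⟨P₁, p1, p2⟩ | ⟨A₂, p1, p2⟩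
    · -- c-II-b : p1 : Q₁.reverse = A ++ P₁, p2 : P = P₁ ++ m
      have hQ₁ : Q₁ = P₁.reverse ++ A.reverse := by
        rw [← List.reverse_reverse Q₁, p1, List.reverse_append]
      have e2' : P ++ A.reverse = (m ++ P₁.reverse) ++ A.reverse := by
        rw [e2, hQ₁]
        simp [List.append_assoc]
      have hPe : P = m ++ P₁.reverse := List.append_cancel_right e2'
      have hm : Pal m := by
        have h4 : m.reverse ++ P₁.reverse = m ++ P₁.reverse := by
          rw [← List.reverse_append, ← p2, hP', hPe]
        exact List.append_cancel_right h4
      obtain ⟨t, u, ht, hu, htu⟩ := twoPal (A := P₁) (K := m) (by rw [← p2]; exact hP) hm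
      rcases split (pal_append_eq hQ) with ⟨D, g1, g2⟩ | ⟨E, g1, g2⟩
      · -- g2 : Q₂ = D ++ Q₁.reverse
        have hD : Pal D := pal_of_two g1 g2
        refine Or.inr ⟨A, D, t, u, hD, ht, hu, ?_⟩
        rw [g2, p1, htu]
        simp [List.append_assoc]
      · -- g2 : Q₁.reverse = E ++ Q₂
        have hE : Pal E := pal_of_two' g1 g2
        have h5 : E ++ Q₂ = A ++ P₁ := g2.symm.trans p1
        rcases split h5 with ⟨k, q1, q2⟩ | ⟨k, q1, q2⟩
        · -- q1 : A = E ++ k, q2 : Q₂ = k ++ P₁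
          refine Or.inl ⟨k, t, u, phi f E, ht, hu, phi_pal hE, ?_⟩
          rw [q2, q1, htu, phi_append]
          simp [List.append_assoc]
        · -- q1 : E = A ++ k, q2 : P₁ = k ++ Q₂
          have hKQ : k ++ Q₂ ++ m = P := by rw [← q2, ← p2]
          exact HL (k.length + m.length) A k Q₂ m rfl (by rw [← q1]; exact hE)
            (by rw [hKQ]; exact hP) hm
    · -- c-II-a : p1 : A = Q₁.reverse ++ A₂, p2 : m = A₂ ++ P
      have hA₂P : Pal (A₂ ++ P) := by
        apply pal_mid (u := Q₁.reverse)
        rw [List.reverse_reverse]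
        have h3 : Q₁.reverse ++ (A₂ ++ P) ++ Q₁ = A ++ P ++ Q₁ := by
          rw [p1]
          simp [List.append_assoc]
        rw [h3]
        exact hR
      obtain ⟨s, t, hs, ht, hst⟩ := twoPal hA₂P hP
      rcases split (pal_append_eq hQ) with ⟨D, g1, g2⟩ | ⟨E, g1, g2⟩
      · -- g2 : Q₂ = D ++ Q₁.reverse
        have hD : Pal D := pal_of_two g1 g2
        refine Or.inr ⟨Q₁.reverse, D, phi f t, phi f s, hD, phi_pal ht, phi_pal hs, ?_⟩
        rw [g2, p1, hst, phi_append, phi_append]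
        simp [List.append_assoc]
      · -- g2 : Q₁.reverse = E ++ Q₂
        have hE : Pal E := pal_of_two' g1 g2
        refine Or.inl ⟨Q₂, phi f t, phi f s, phi f E, phi_pal ht, phi_pal hs, phi_pal hE, ?_⟩
        rw [p1, g2, hst, phi_append, phi_append, phi_append]
        simp [List.append_assoc]

lemma inN_rev {f : α → α} (hf : ∀ a, f (f a) = a) {w : List α} (h : InN f w) :
    InN f w.reverse := by
  rcases h with ⟨Z, S, T, U, hS, hT, hU, hw⟩ | ⟨Z, S, T, U, hS, hT, hU, hw⟩ <;>
    [refine Or.inr ⟨(phi f Z).reverse, U, T, S, hU, hT, hS, ?_⟩;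
     refine Or.inl ⟨(phi f Z).reverse, U, T, S, hU, hT, hS, ?_⟩] <;>
  · have hS' : S.reverse = S := hS
    have hT' : T.reverse = T := hT
    have hU' : U.reverse = U := hU
    rw [phi_rev_phi hf, hw]
    simp [List.reverse_append, List.append_assoc, hS', hT', hU']

lemma inN_phi {f : α → α} (hf : ∀ a, f (f a) = a) {w : List α} (h : InN f w) :
    InN f (phi f w) := by
  rcases h with ⟨Z, S, T, U, hS, hT, hU, hw⟩ | ⟨Z, S, T, U, hS, hT, hU, hw⟩
  · refine Or.inr ⟨Z, phi f U, phi f T, phi f S, phi_pal hU, phi_pal hT, phi_pal hS, ?_⟩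
    rw [hw]
    simp [phi_append, phi_phi hf, List.append_assoc]
  · refine Or.inl ⟨Z, phi f U, phi f T, phi f S, phi_pal hU, phi_pal hT, phi_pal hS, ?_⟩
    rw [hw]
    simp [phi_append, phi_phi hf, List.append_assoc]

lemma CICII {f : α → α} (hf : ∀ a, f (f a) = a) : ∀ n : ℕ,
    (∀ G₂ G₁ P Q : List α, G₂.length + G₁.length = n → Pal P → Pal Q →
      Pal (G₂ ++ G₁ ++ P ++ Q ++ phi f G₁) → InN f G₂) ∧
    (∀ A P Q R W : List α, A.length = n → Pal P → Pal Q → Pal R →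
      A ++ P ++ Q ++ phi f A = R ++ W → InN f W) := by
  intro n
  induction n using Nat.strong_induction_on with
  | _ n ih =>
  have hCI : ∀ G₂ G₁ P Q : List α, G₂.length + G₁.length = n → Pal P → Pal Q →
      Pal (G₂ ++ G₁ ++ P ++ Q ++ phi f G₁) → InN f G₂ := by
    intro G₂ G₁ P Q hn hPp hQp hpal
    have hpal' : Pal (G₂ ++ (G₁ ++ P ++ Q ++ phi f G₁)) := by
      have hx : G₂ ++ (G₁ ++ P ++ Q ++ phi f G₁) = G₂ ++ G₁ ++ P ++ Q ++ phi f G₁ := by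
        simp [List.append_assoc]
      rw [hx]; exact hpal
    rcases split (pal_append_eq hpal') with ⟨m, e1, e2⟩ | ⟨m, e1, e2⟩
    · -- e1 : (V).reverse = G₂ ++ m, e2 : V = m ++ G₂.reverse
      have hm : Pal m := pal_of_two e1 e2
      by_cases hG : G₂ = []
      · rw [hG]; exact inN_nil f
      · have hGl : G₂.length ≠ 0 := fun hh => hG (List.length_eq_zero_iff.mp hh)
        have h2 := (ih G₁.length (by omega)).2 G₁ P Q m G₂.reverse rfl hPp hQp hm e2
        have h3 := inN_rev hf h2
        rwa [List.reverse_reverse] at h3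
    · -- e1 : G₂ = V.reverse ++ m, e2 : G₂.reverse = m ++ V
      have hm : Pal m := pal_of_two' e1 e2
      have hP' : P.reverse = P := hPp
      have hQ' : Q.reverse = Q := hQp
      have hVrev : (G₁ ++ P ++ Q ++ phi f G₁).reverse
          = (phi f G₁).reverse ++ Q ++ P ++ G₁.reverse := by
        simp [List.reverse_append, List.append_assoc, hP', hQ']
      refine Or.inl ⟨(phi f G₁).reverse, Q, P, m, hQp, hPp, hm, ?_⟩
      rw [e1, hVrev, phi_rev_phi hf]
  refine ⟨hCI, ?_⟩
  intro A P Q R W hn hPp hQp hRp heq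
  have heq' : A ++ (P ++ (Q ++ phi f A)) = R ++ W := by
    simpa [List.append_assoc] using heq
  rcases split heq' with ⟨m, e1, e2⟩ | ⟨m, e1, e2⟩
  · -- e1 : R = A ++ m, e2 : P ++ (Q ++ phi A) = m ++ W
    rcases split e2 with ⟨k, f1, f2⟩ | ⟨k, f1, f2⟩
    · -- f1 : m = P ++ k, f2 : Q ++ phi A = k ++ W
      rcases split f2 with ⟨j, g1, g2⟩ | ⟨j, g1, g2⟩
      · -- g1 : k = Q ++ j, g2 : phi A = j ++ W : case (d)
        have hAeq : A = phi f W ++ phi f j := by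
          rw [← phi_phi hf A, g2, phi_append]
        have hRw : phi f W ++ phi f j ++ P ++ Q ++ phi f (phi f j) = R := by
          rw [phi_phi hf, e1, f1, g1, hAeq]
          simp [List.append_assoc]
        have hR' : Pal (phi f W ++ phi f j ++ P ++ Q ++ phi f (phi f j)) := by
          rw [hRw]; exact hRp
        have hlen : (phi f W).length + (phi f j).length = n := by
          have hl := congrArg List.length hAeq
          simp only [List.length_append, length_phi] at hl ⊢
          omega
        have h2 := inN_phi hf (hCI (phi f W) (phi f j) P Q hlen hPp hQp hR')
        rwa [phi_phi hf] at h2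
      · -- g1 : Q = k ++ j, g2 : W = j ++ phi A : case (c)
        rw [g2]
        refine KL2 k.length A P k j rfl hPp ?_ (by rw [← g1]; exact hQp)
        have hx : A ++ P ++ k = R := by
          rw [e1, f1]; simp [List.append_assoc]
        rw [hx]; exact hRp
    · -- f1 : P = m ++ k, f2 : W = k ++ (Q ++ phi A) : case (b)
      have hF : FF A k := KLstar m.length A m k rfl (by rw [e1] at hRp; exact hRp)
        (by rw [← f1]; exact hPp)
      rw [f2, ← List.append_assoc]
      exact dispatch hF hQp
  · -- e1 : A = R ++ m, e2 : W = m ++ (P ++ (Q ++ phi A)) : case (a)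
    refine Or.inl ⟨m, P, Q, phi f R, hPp, hQp, phi_pal hRp, ?_⟩
    rw [e2, e1, phi_append]
    simp [List.append_assoc]

end Pal14

theorem stmt14 {α : Type*} (φ : List α → List α)
    (hanti : ∀ X Y : List α, φ (X ++ Y) = φ Y ++ φ X)
    (hbij : Function.Bijective φ)
    (hinv : ∀ a : α, φ (φ [a]) = [a])
    (A X Y P Q R : List α) (hP : Pal P) (hQ : Pal Q) (hR : Pal R)
    (h : A ++ P ++ Q ++ φ A ++ X = R ++ Y) :
    ∃ S T U Z : List α, Pal S ∧ Pal T ∧ Pal U ∧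
      (X = Z ++ S ++ T ++ φ Z ++ U ++ Y ∨
       X = S ++ Z ++ T ++ U ++ φ Z ++ Y ∨
       Y = Z ++ S ++ T ++ φ Z ++ U ++ X ∨
       Y = S ++ Z ++ T ++ U ++ φ Z ++ X) := by
  classical
  have hnil : φ [] = [] := by
    have h0 := hanti [] []
    simp only [List.append_nil] at h0
    have hl := congrArg List.length h0
    simp only [List.length_append] at hl
    exact List.length_eq_zero_iff.mp (by omega)
  have hne : ∀ c : α, φ [c] ≠ [] := by
    intro c hc
    have h1 : φ [c] = φ [] := hc.trans hnil.symm
    have := hbij.1 h1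
    simp at this
  have hcons : ∀ (a : α) (w : List α), φ (a :: w) = φ w ++ φ [a] := by
    intro a w
    have := hanti [a] w
    simpa using this
  have hgrow : ∀ w : List α, w.length ≤ (φ w).length := by
    intro w
    induction w with
    | nil => simp [hnil]
    | cons a w ihw =>
      rw [hcons]
      have h1 : 1 ≤ (φ [a]).length := by
        cases h' : φ [a] with
        | nil => exact absurd h' (hne a)
        | cons x xs => simp
      simp only [List.length_append, List.length_cons]
      omega
  have hlen1 : ∀ a : α, ∃ b, φ [a] = [b] := by
    intro a
    have h1 : (φ (φ [a])).length = 1 := by rw [hinv a]; rfl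
    have h2 := hgrow (φ [a])
    have h4 : (φ [a]).length ≠ 0 := by
      simpa [List.length_eq_zero_iff] using hne a
    have h3 : (φ [a]).length = 1 := by omega
    cases h' : φ [a] with
    | nil => rw [h'] at h3; simp at h3
    | cons x xs =>
      rw [h'] at h3
      simp only [List.length_cons] at h3
      exact ⟨x, by rw [List.length_eq_zero_iff.mp (show xs.length = 0 by omega)]⟩
  choose f hfdef using hlen1
  have hf : ∀ a, f (f a) = a := by
    intro a
    have h1 := hinv a
    rw [hfdef a, hfdef (f a)] at h1
    simpa using h1
  have hphi : ∀ w, φ w = Pal14.phi f w := by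
    intro w
    induction w with
    | nil => simp [hnil]
    | cons a w ihw =>
      rw [hcons, ihw, hfdef]
      simp [Pal14.phi]
  rw [hphi A] at h
  rcases Pal14.split h with ⟨m, e1, e2⟩ | ⟨m, e1, e2⟩
  · -- e1 : R = (A ++ P ++ Q ++ phi f A) ++ m, e2 : X = m ++ Y : case I
    have hP' : P.reverse = P := hP
    have hQ' : Q.reverse = Q := hQ
    have hR' : R.reverse = R := hR
    have hpal0 : Pal R.reverse := by rw [hR']; exact hR
    have hw : R.reverse = m.reverse ++ (Pal14.phi f A).reverse ++ Q ++ P ++ A.reverse := by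
      rw [e1]
      simp [List.reverse_append, List.append_assoc, hP', hQ']
    have hpal : Pal (m.reverse ++ (Pal14.phi f A).reverse ++ Q ++ P ++ A.reverse) := by
      rw [← hw]; exact hpal0
    have hCIr := (Pal14.CICII hf (m.reverse.length + ((Pal14.phi f A).reverse).length)).1
      m.reverse (Pal14.phi f A).reverse Q P rfl hQ hP
      (by rw [Pal14.phi_rev_phi hf]; exact hpal)
    have hIn : Pal14.InN f m := by
      have h5 := Pal14.inN_rev hf hCIr
      rwa [List.reverse_reverse] at h5
    rcases hIn with ⟨Z, S, T, U, hS, hT, hU, hm⟩ | ⟨Z, S, T, U, hS, hT, hU, hm⟩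
    · exact ⟨S, T, U, Z, hS, hT, hU, Or.inl (by rw [e2, hm, hphi Z])⟩
    · exact ⟨S, T, U, Z, hS, hT, hU, Or.inr (Or.inl (by rw [e2, hm, hphi Z]))⟩
  · -- e1 : A ++ P ++ Q ++ phi f A = R ++ m, e2 : Y = m ++ X : case II
    have hIn := (Pal14.CICII hf A.length).2 A P Q R m rfl hP hQ hR e1
    rcases hIn with ⟨Z, S, T, U, hS, hT, hU, hm⟩ | ⟨Z, S, T, U, hS, hT, hU, hm⟩
    · exact ⟨S, T, U, Z, hS, hT, hU, Or.inr (Or.inr (Or.inl (by rw [e2, hm, hphi Z])))⟩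
    · exact ⟨S, T, U, Z, hS, hT, hU, Or.inr (Or.inr (Or.inr (by rw [e2, hm, hphi Z])))⟩
end

section
/- An element of a free group is a product of at most two palindromes if and only if its reduced form is a concatenation of the form A·P·Q·A⁻¹, where P and Q are (possibly empty) palindromic reduced words and A is a reduced word. -/
/-- A word over Σ ∪ Σ⁻¹ is reduced iff it is the normal form of the free group
element it represents. -/
def Red {α : Type*} [DecidableEq α] (w : List (α × Bool)) : Prop :=
  (FreeGroup.mk w).toWord = w

/-- A free group element is a palindrome iff its reduced form equals its mirror image. -/
def GPal {α : Type*} [DecidableEq α] (x : FreeGroup α) : Prop :=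
  x.toWord.reverse = x.toWord

set_option linter.unusedSectionVars false

namespace Pal15

variable {α : Type*} [DecidableEq α]

def st (a : α × Bool) : α × Bool := (a.1, !a.2)

@[simp] lemma st_st (a : α × Bool) : st (st a) = a := by simp [st]

@[simp] lemma st_ne (a : α × Bool) : st a ≠ a := by simp [st, Prod.ext_iff]

@[simp] lemma ne_st (a : α × Bool) : a ≠ st a := (st_ne a).symm

lemma st_swap {a b : α × Bool} : a = st b ↔ b = st a := by
  constructor <;> (rintro rfl; simp)

lemma st_swap_ne {a b : α × Bool} : a ≠ st b ↔ b ≠ st a :=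
  not_congr st_swap

def Ch (L : List (α × Bool)) : Prop := List.Chain' (fun a b => b ≠ st a) L

@[simp] lemma ch_nil : Ch ([] : List (α × Bool)) := List.isChain_nil

@[simp] lemma ch_singleton (a : α × Bool) : Ch [a] := List.isChain_singleton a

lemma cancel_iff (x h : α × Bool) : (x.1 = h.1 ∧ x.2 = !h.2) ↔ h = st x := by
  cases x with | mk x b => cases h with | mk y c =>
  simp only [st, Prod.ext_iff, Prod.fst, Prod.snd]
  constructor
  · rintro ⟨rfl, rfl⟩; simp
  · rintro ⟨rfl, rfl⟩; simp

lemma red_iff_ch {L : List (α × Bool)} : Red L ↔ Ch L := by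
  rw [Red, FreeGroup.toWord_mk]
  constructor
  · intro h
    induction L with
    | nil => simp
    | cons x t ih =>
      rw [FreeGroup.reduce.cons] at h
      rcases ht : FreeGroup.reduce t with _ | ⟨hd, tl⟩
      · rw [ht] at h
        have ht0 : t = [] := by
          have := congrArg List.length h
          simp at this
          exact this
        subst ht0; simp
      · rw [ht] at h
        dsimp only at h
        by_cases hc : x.1 = hd.1 ∧ x.2 = !hd.2
        · rw [if_pos hc] at h
          exfalso
          have h1 : (hd :: tl).length ≤ t.length := by
            have := FreeGroup.Red.length_le (FreeGroup.reduce.red (L := t))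
            rw [ht] at this
            exact this
          rw [h] at h1
          simp at h1
        · rw [if_neg hc] at h
          have h2 : t = hd :: tl := by
            have := h
            injection this with _ h2
            exact h2.symm
          have hrt : FreeGroup.reduce t = t := by rw [ht, h2]
          have hcht := ih hrt
          rw [Ch, List.Chain', h2, List.isChain_cons_cons]
          refine ⟨?_, h2 ▸ hcht⟩
          intro hctr
          exact hc ((cancel_iff x hd).mpr hctr)
  · intro h
    induction L with
    | nil => simp
    | cons x t ih =>
      rw [Ch, List.Chain', List.isChain_cons] at h
      have hrt : FreeGroup.reduce t = t := ih h.2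
      rw [FreeGroup.reduce.cons, hrt]
      cases t with
      | nil => rfl
      | cons hd tl =>
        dsimp only
        rw [if_neg ?_]
        rw [cancel_iff]
        exact h.1 hd rfl

lemma red_toWord (x : FreeGroup α) : Red x.toWord := by
  rw [Red, FreeGroup.mk_toWord]

lemma ch_toWord (x : FreeGroup α) : Ch x.toWord := red_iff_ch.mp (red_toWord x)

lemma toWord_eq_of {x : FreeGroup α} {W : List (α × Bool)} (hW : Ch W)
    (hmk : FreeGroup.mk W = x) : x.toWord = W := by
  subst hmk; exact red_iff_ch.mpr hW

lemma ch_infix {L W : List (α × Bool)} (h : Ch L) (h' : W <:+: L) : Ch W :=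
  List.IsChain.infix h h'


/-! ### invRev and map st -/

lemma invRev_eq (A : List (α × Bool)) : FreeGroup.invRev A = (A.map st).reverse := rfl

lemma invRev_eq' (A : List (α × Bool)) : FreeGroup.invRev A = (A.reverse).map st := by
  rw [invRev_eq, List.map_reverse]

@[simp] lemma map_st_st (A : List (α × Bool)) : (A.map st).map st = A := by
  simp [List.map_map, Function.comp_def]

lemma ch_map_st {A : List (α × Bool)} (h : Ch A) : Ch (A.map st) := by
  rw [Ch, List.Chain', List.isChain_map]
  refine h.imp ?_
  intro a b hab hctr
  apply hab
  have := congrArg st hctr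
  simpa using this

lemma ch_reverse {A : List (α × Bool)} (h : Ch A) : Ch A.reverse := by
  rw [Ch, List.Chain', List.isChain_reverse]
  refine h.imp ?_
  intro a b hab
  exact fun hctr => hab (st_swap.mp hctr)

lemma ch_invRev {A : List (α × Bool)} (h : Ch A) : Ch (FreeGroup.invRev A) :=
  ch_reverse (ch_map_st h)

/-! ### palindromes -/

@[simp] lemma pal_nil : Pal ([] : List (α × Bool)) := rfl

@[simp] lemma pal_singleton (a : α × Bool) : Pal [a] := rfl

lemma pal_pair (a : α × Bool) : Pal [a, a] := rfl

lemma pal_getLast? {P : List (α × Bool)} (h : Pal P) : P.getLast? = P.head? := by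
  conv_lhs => rw [← h]
  rw [List.getLast?_reverse]

lemma pal_sandwich {P : List (α × Bool)} (h : Pal P) (a : α × Bool) :
    Pal ([a] ++ P ++ [a]) := by
  unfold Pal at h ⊢
  simp [h]

lemma pal_decomp {V : List (α × Bool)} (h : Pal V) (h2 : 2 ≤ V.length) :
    ∃ a M, V = a :: M ++ [a] ∧ Pal M := by
  rcases V with _ | ⟨a, t⟩
  · simp at h2
  rcases List.eq_nil_or_concat t with rfl | ⟨M, b, rfl⟩
  · simp at h2
  rw [List.concat_eq_append] at h h2 ⊢
  have h' := h
  unfold Pal at h'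
  rw [show (a :: (M ++ [b])).reverse = b :: (M.reverse ++ [a]) by simp] at h'
  injection h' with hba htail
  subst hba
  have hM : M.reverse = M := by
    have := congrArg List.dropLast htail
    simpa using this
  exact ⟨b, M, by simp, hM⟩

/-! ### mk manipulations -/

lemma mk_cancel (L₁ L₂ : List (α × Bool)) (a : α × Bool) :
    FreeGroup.mk (L₁ ++ a :: st a :: L₂) = FreeGroup.mk (L₁ ++ L₂) := by
  apply Quot.sound
  rcases a with ⟨x, b⟩
  exact FreeGroup.Red.Step.not

lemma mk_cancel_nil (L₂ : List (α × Bool)) (a : α × Bool) :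
    FreeGroup.mk (a :: st a :: L₂) = FreeGroup.mk L₂ :=
  mk_cancel [] L₂ a


lemma invRev_append (L₁ L₂ : List (α × Bool)) :
    FreeGroup.invRev (L₁ ++ L₂) = FreeGroup.invRev L₂ ++ FreeGroup.invRev L₁ := by
  simp [invRev_eq]

lemma invRev_singleton (a : α × Bool) : FreeGroup.invRev [a] = [st a] := rfl

@[simp] lemma invRev_nil : FreeGroup.invRev ([] : List (α × Bool)) = [] := rfl

lemma invRev_head? (A : List (α × Bool)) :
    (FreeGroup.invRev A).head? = A.getLast?.map st := by
  rw [invRev_eq, List.head?_reverse, List.getLast?_map]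

lemma invRev_getLast? (A : List (α × Bool)) :
    (FreeGroup.invRev A).getLast? = A.head?.map st := by
  rw [invRev_eq, List.getLast?_reverse, List.head?_map]

lemma mk_pair (a : α × Bool) : FreeGroup.mk [a, st a] = 1 := by
  have h := mk_cancel_nil [] a
  rw [← FreeGroup.one_eq_mk] at h
  exact h

lemma mk_mul_pair (a : α × Bool) :
    FreeGroup.mk [a] * FreeGroup.mk [st a] = 1 := by
  rw [FreeGroup.mul_mk]; exact mk_pair a

lemma mk_mul_pair' (a : α × Bool) :
    FreeGroup.mk [st a] * FreeGroup.mk [a] = 1 := by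
  have := mk_mul_pair (st a); simpa using this

lemma mk_mul_pair_assoc (a : α × Bool) (x : FreeGroup α) :
    FreeGroup.mk [a] * (FreeGroup.mk [st a] * x) = x := by
  rw [← mul_assoc, mk_mul_pair, one_mul]

lemma mk_mul_pair_assoc' (a : α × Bool) (x : FreeGroup α) :
    FreeGroup.mk [st a] * (FreeGroup.mk [a] * x) = x := by
  rw [← mul_assoc, mk_mul_pair', one_mul]

lemma ch_append {L₁ L₂ : List (α × Bool)} (h₁ : Ch L₁) (h₂ : Ch L₂)
    (hb : ∀ x ∈ L₁.getLast?, ∀ y ∈ L₂.head?, y ≠ st x) : Ch (L₁ ++ L₂) :=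
  List.isChain_append.2 ⟨h₁, h₂, hb⟩

lemma ch_append_iff {L₁ L₂ : List (α × Bool)} :
    Ch (L₁ ++ L₂) ↔ Ch L₁ ∧ Ch L₂ ∧ ∀ x ∈ L₁.getLast?, ∀ y ∈ L₂.head?, y ≠ st x :=
  List.isChain_append


lemma invRev_cons (x : α × Bool) (L : List (α × Bool)) :
    FreeGroup.invRev (x :: L) = FreeGroup.invRev L ++ [st x] := by
  rw [show x :: L = [x] ++ L from rfl, invRev_append, invRev_singleton]

/-- Key conjugation lemma -/
lemma conj (a : α × Bool) {A P Q : List (α × Bool)}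
    (hch : Ch (A ++ P ++ Q ++ FreeGroup.invRev A)) (hP : Pal P) (hQ : Pal Q) :
    ∃ A' P' Q', Pal P' ∧ Pal Q' ∧ Ch (A' ++ P' ++ Q' ++ FreeGroup.invRev A') ∧
      FreeGroup.mk ([a] ++ (A ++ P ++ Q ++ FreeGroup.invRev A) ++ [st a]) =
      FreeGroup.mk (A' ++ P' ++ Q' ++ FreeGroup.invRev A') := by
  rcases A with _ | ⟨a0, A''⟩
  · -- A = []
    simp only [invRev_nil, List.nil_append, List.append_nil] at hch ⊢
    rw [ch_append_iff] at hch
    obtain ⟨hchP, hchQ, hbdPQ⟩ := hch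
    by_cases hc1 : (P ++ Q).head? = some (st a)
    · -- cancellation on the left
      rcases P with _ | ⟨p0, Pt⟩
      · -- P = [], so Q starts (and ends) with st a
        simp only [List.nil_append] at hc1 ⊢
        rcases Q with _ | ⟨q0, Qt⟩
        · simp at hc1
        have hq0 : q0 = st a := by simpa using hc1
        subst hq0
        rcases Qt with _ | ⟨q1, Qt'⟩
        · -- Q = [st a]
          refine ⟨[], [], [st a], pal_nil, pal_singleton _, ch_singleton _, ?_⟩
          have h1 := mk_cancel [] [st a] a
          simp only [List.append_assoc, List.cons_append, List.nil_append,
            List.append_nil, invRev_nil] at h1 ⊢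
          exact h1
        · -- Q = st a :: M ++ [st a]
          obtain ⟨q, M, hQdec, hMpal⟩ := pal_decomp hQ (by simp)
          have hq : q = st a := by
            have := congrArg List.head? hQdec
            simpa using this.symm
          subst hq
          refine ⟨[], M, [st a, st a], hMpal, pal_pair _, ?_, ?_⟩
          · -- Ch (M ++ [st a, st a])
            have htl : Ch (M ++ [st a]) := by
              refine ch_infix hchQ ⟨[st a], [], ?_⟩
              simp [hQdec]
            have : Ch ((M ++ [st a]) ++ [st a]) := by
              refine ch_append htl (ch_singleton _) ?_
              intro x hx y hy
              simp only [List.getLast?_append, List.getLast?_singleton, Option.or_some, Option.some_or,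
                Option.mem_def, Option.some.injEq] at hx
              simp only [List.head?_cons, Option.mem_def, Option.some.injEq] at hy
              subst hx; subst hy
              simp
            simpa [List.append_assoc] using this
          · rw [hQdec]
            have h1 := mk_cancel [] (M ++ st a :: st a :: []) a
            simp only [List.append_assoc, List.cons_append, List.nil_append,
              List.append_nil, invRev_nil] at h1 ⊢
            exact h1
      · -- P = p0 :: Pt with p0 = st a
        have hp0 : p0 = st a := by simpa using hc1
        subst hp0
        -- fact: if Q ≠ [] then Q.head? ≠ some a
        have hQhd : ∀ y ∈ Q.head?, y ≠ a := by
          intro y hy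
          have hlastP : (st a :: Pt).getLast? = some (st a) := by
            rw [pal_getLast? hP]; rfl
          have := hbdPQ (st a) (by rw [hlastP]; rfl) y hy
          simpa using this
        rcases Pt with _ | ⟨p1, Pt'⟩
        · -- P = [st a]
          refine ⟨[], Q, [st a], hQ, pal_singleton _, ?_, ?_⟩
          · simp only [invRev_nil, List.append_nil, List.nil_append]
            refine ch_append hchQ (ch_singleton _) ?_
            intro x hx y hy
            simp only [List.head?_cons, Option.mem_def, Option.some.injEq] at hy
            subst hy
            intro hctr
            have hxa : a = x := by simpa using congrArg st hctr
            subst hxa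
            have hhd : Q.head? = some a := by
              rw [← pal_getLast? hQ]; exact hx
            exact hQhd a hhd rfl
          · have h1 := mk_cancel [] (Q ++ st a :: []) a
            simp only [List.append_assoc, List.cons_append, List.nil_append,
              List.append_nil, invRev_nil] at h1 ⊢
            exact h1
        · -- P = st a :: M ++ [st a]
          obtain ⟨q, M, hPdec, hMpal⟩ := pal_decomp hP (by simp)
          have hq : q = st a := by
            have := congrArg List.head? hPdec
            simpa using this.symm
          subst hq
          refine ⟨[], M, [st a] ++ Q ++ [st a], hMpal, pal_sandwich hQ _, ?_, ?_⟩
          · simp only [invRev_nil, List.append_nil, List.nil_append]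
            have htl : Ch (M ++ [st a] ++ Q) := by
              refine ch_infix (ch_append hchP hchQ hbdPQ) ⟨[st a], [], ?_⟩
              simp [hPdec]
            have : Ch ((M ++ [st a] ++ Q) ++ [st a]) := by
              refine ch_append htl (ch_singleton _) ?_
              intro x hx y hy
              simp only [List.head?_cons, Option.mem_def, Option.some.injEq] at hy
              subst hy
              intro hctr
              have hxa : a = x := by simpa using congrArg st hctr
              subst hxa
              rcases hQe : Q with _ | ⟨w, Wt⟩
              · rw [hQe] at hx
                simp only [List.append_nil, List.getLast?_append,
                  List.getLast?_singleton, Option.or_some, Option.some_or, Option.mem_def,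
                  Option.some.injEq] at hx
                exact st_ne a hx
              · rw [hQe] at hx
                have : Q.getLast? = some a := by
                  rw [hQe]
                  simpa [List.getLast?_append] using hx
                have hhd : Q.head? = some a := by rw [← pal_getLast? hQ]; exact this
                exact hQhd a hhd rfl
            simpa [List.append_assoc] using this
          · rw [hPdec]
            have h1 := mk_cancel [] (M ++ st a :: (Q ++ st a :: [])) a
            simp only [List.append_assoc, List.cons_append, List.nil_append,
              List.append_nil, invRev_nil] at h1 ⊢
            exact h1
    · -- no cancellation on the left
      by_cases hc2 : (P ++ Q).getLast? = some a
      · -- cancellation on the right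
        rcases List.eq_nil_or_concat Q with rfl | ⟨M0, q, hQdec0⟩
        · -- Q = [], P ends with a hence starts with a
          simp only [List.append_nil] at hc2 hc1 ⊢
          have hPhd : P.head? = some a := by rw [← pal_getLast? hP]; exact hc2
          rcases P with _ | ⟨p0, Pt⟩
          · simp at hPhd
          have hp0 : a = p0 := by simpa using hPhd.symm
          subst hp0
          rcases Pt with _ | ⟨p1, Pt'⟩
          · -- P = [a]
            refine ⟨[], [a], [], pal_singleton _, pal_nil, by simp, ?_⟩
            have h1 := mk_cancel [a] [] a
            simp only [List.append_assoc, List.cons_append, List.nil_append,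
              List.append_nil, invRev_nil] at h1 ⊢
            exact h1
          · -- P = a :: M ++ [a]
            obtain ⟨q, M, hPdec, hMpal⟩ := pal_decomp hP (by simp)
            have hq : a = q := by
              have := congrArg List.head? hPdec
              simpa using this
            subst hq
            refine ⟨[], [a, a], M, pal_pair _, hMpal, ?_, ?_⟩
            · simp only [invRev_nil, List.append_nil, List.nil_append]
              have hdl : Ch ([a] ++ M) := by
                refine ch_infix hchP ⟨[], [a], ?_⟩
                simp [hPdec]
              have : Ch ([a] ++ ([a] ++ M)) := by
                refine ch_append (ch_singleton _) hdl ?_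
                intro x hx y hy
                simp only [List.getLast?_singleton, Option.mem_def, Option.some.injEq] at hx
                subst hx
                simp only [List.cons_append, List.nil_append, List.head?_cons,
                  Option.mem_def, Option.some.injEq] at hy
                subst hy
                simp
              simpa [List.append_assoc] using this
            · rw [hPdec]
              have h1 := mk_cancel (a :: a :: M) [] a
              simp only [List.append_assoc, List.cons_append, List.nil_append,
                List.append_nil, invRev_nil] at h1 ⊢
              exact h1
        · -- Q ≠ [], Q ends with a hence starts with a
          rw [List.concat_eq_append] at hQdec0
          have hQlast : Q.getLast? = some a := by
            rw [hQdec0] at hc2 ⊢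
            simpa [List.getLast?_append] using hc2
          have hQhd : Q.head? = some a := by rw [← pal_getLast? hQ]; exact hQlast
          have hPhd : ∀ y ∈ P.head?, y ≠ st a := by
            intro y hy hctr
            apply hc1
            rcases P with _ | ⟨p0, Pt⟩
            · simp at hy
            · simp only [List.head?_cons, Option.mem_def, Option.some.injEq] at hy
              subst hy
              rw [hctr]
              rfl
          rcases Q with _ | ⟨q0, Qt⟩
          · simp at hQhd
          have hq0 : a = q0 := by simpa using hQhd.symm
          subst hq0
          rcases Qt with _ | ⟨q1, Qt'⟩
          · -- Q = [a]
            refine ⟨[], [a], P, pal_singleton _, hP, ?_, ?_⟩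
            · simp only [invRev_nil, List.append_nil, List.nil_append]
              refine ch_append (ch_singleton _) hchP ?_
              intro x hx y hy
              simp only [List.getLast?_singleton, Option.mem_def, Option.some.injEq] at hx
              subst hx
              exact hPhd y hy
            · have h1 := mk_cancel (a :: P) [] a
              simp only [List.append_assoc, List.cons_append, List.nil_append,
                List.append_nil, invRev_nil] at h1 ⊢
              exact h1
          · -- Q = a :: M ++ [a]
            obtain ⟨q, M, hQdec, hMpal⟩ := pal_decomp hQ (by simp)
            have hq : a = q := by
              have := congrArg List.head? hQdec
              simpa using this
            subst hq
            refine ⟨[], [a] ++ P ++ [a], M, pal_sandwich hP _, hMpal, ?_, ?_⟩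
            · simp only [invRev_nil, List.append_nil, List.nil_append]
              have hdl : Ch (P ++ [a] ++ M) := by
                refine ch_infix (ch_append hchP hchQ hbdPQ) ⟨[], [a], ?_⟩
                simp [hQdec]
              have : Ch ([a] ++ (P ++ [a] ++ M)) := by
                refine ch_append (ch_singleton _) hdl ?_
                intro x hx y hy
                simp only [List.getLast?_singleton, Option.mem_def, Option.some.injEq] at hx
                subst hx
                rcases P with _ | ⟨p0, Pt⟩
                · simp only [List.nil_append, List.cons_append, List.head?_cons,
                    Option.mem_def, Option.some.injEq] at hy
                  subst hy
                  simp
                · simp only [List.append_assoc, List.cons_append, List.head?_cons,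
                    Option.mem_def, Option.some.injEq] at hy
                  subst hy
                  exact hPhd p0 rfl
              simpa [List.append_assoc] using this
            · rw [hQdec]
              have h1 := mk_cancel (a :: (P ++ a :: M)) [] a
              simp only [List.append_assoc, List.cons_append, List.nil_append,
                List.append_nil, invRev_nil] at h1 ⊢
              exact h1
      · -- no cancellation at all
        by_cases hPQ : P ++ Q = []
        · -- x = a * (st a) = 1
          rw [List.append_eq_nil_iff] at hPQ
          obtain ⟨rfl, rfl⟩ := hPQ
          refine ⟨[], [], [], pal_nil, pal_nil, by simp, ?_⟩
          have h1 := mk_cancel [] [] a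
          simp only [List.append_assoc, List.cons_append, List.nil_append,
            List.append_nil, invRev_nil] at h1 ⊢
          exact h1
        · refine ⟨[a], P, Q, hP, hQ, ?_, ?_⟩
          · rw [invRev_singleton]
            have hin : Ch ((P ++ Q) ++ [st a]) := by
              refine ch_append (ch_append hchP hchQ hbdPQ) (ch_singleton _) ?_
              intro x hx y hy
              simp only [List.head?_cons, Option.mem_def, Option.some.injEq] at hy
              subst hy
              intro hctr
              have hxa : a = x := by simpa using congrArg st hctr
              subst hxa
              exact hc2 hx
            have : Ch ([a] ++ ((P ++ Q) ++ [st a])) := by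
              refine ch_append (ch_singleton _) hin ?_
              intro x hx y hy
              simp only [List.getLast?_singleton, Option.mem_def, Option.some.injEq] at hx
              subst hx
              intro hctr
              apply hc1
              rcases List.exists_cons_of_ne_nil hPQ with ⟨h0, t0, hPQdec⟩
              rw [hPQdec] at hy ⊢
              simp only [List.cons_append, List.head?_cons, Option.mem_def,
                Option.some.injEq] at hy ⊢
              rw [hy]
              exact hctr
            simpa [List.append_assoc] using this
          · simp only [invRev_singleton, List.append_assoc, List.cons_append,
              List.nil_append, List.append_nil, invRev_nil]
  · -- A = a0 :: A''
    by_cases ha0 : a0 = st a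
    · subst ha0
      refine ⟨A'', P, Q, hP, hQ, ?_, ?_⟩
      · refine ch_infix hch ⟨[st a], [a], ?_⟩
        simp [invRev_cons, List.append_assoc]
      · rw [invRev_cons]
        have h1 := mk_cancel [] (A'' ++ (P ++ (Q ++ (FreeGroup.invRev A'' ++ a :: st a :: [])))) a
        have h2 := mk_cancel (A'' ++ (P ++ (Q ++ FreeGroup.invRev A''))) [] a
        simp only [List.append_assoc, List.cons_append, List.nil_append,
          List.append_nil, st_st] at h1 h2 ⊢
        rw [h1]
        exact h2
    · refine ⟨a :: (a0 :: A''), P, Q, hP, hQ, ?_, ?_⟩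
      · rw [invRev_cons (x := a)]
        have hbd1 : ∀ x ∈ ((a0 :: A'') ++ P ++ Q ++ FreeGroup.invRev (a0 :: A'')).getLast?,
            ∀ y ∈ [st a].head?, y ≠ st x := by
          intro x hx y hy
          simp only [List.head?_cons, Option.mem_def, Option.some.injEq] at hy
          subst hy
          simp only [List.append_assoc, List.getLast?_append, invRev_cons,
            List.getLast?_singleton, Option.or_some, Option.some_or, Option.mem_def, Option.some.injEq] at hx
          subst hx
          simp only [st_st]
          intro hctr
          exact ha0 hctr.symm
        have hin : Ch (((a0 :: A'') ++ P ++ Q ++ FreeGroup.invRev (a0 :: A'')) ++ [st a]) :=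
          ch_append hch (ch_singleton _) hbd1
        have : Ch ([a] ++ (((a0 :: A'') ++ P ++ Q ++ FreeGroup.invRev (a0 :: A'')) ++ [st a])) := by
          refine ch_append (ch_singleton _) hin ?_
          intro x hx y hy
          simp only [List.getLast?_singleton, Option.mem_def, Option.some.injEq] at hx
          subst hx
          simp only [List.append_assoc, List.cons_append, List.head?_cons,
            Option.mem_def, Option.some.injEq] at hy
          subst hy
          exact ha0
        simpa [List.append_assoc, invRev_cons] using this
      · simp only [invRev_cons, List.append_assoc, List.cons_append, List.nil_append,
          List.append_nil]


/-- Key lemma: product of two palindromic reduced words has the required normal form. -/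
lemma key : ∀ (n : ℕ) (U V : List (α × Bool)), U.length + V.length ≤ n →
    Ch U → Ch V → Pal U → Pal V →
    ∃ A P Q : List (α × Bool), Pal P ∧ Pal Q ∧
      Ch (A ++ P ++ Q ++ FreeGroup.invRev A) ∧
      FreeGroup.mk U * FreeGroup.mk V = FreeGroup.mk (A ++ P ++ Q ++ FreeGroup.invRev A) := by
  intro n
  induction n with
  | zero =>
    intro U V hlen _ _ _ _
    have hU : U = [] := by
      have := Nat.le_zero.mp hlen
      exact List.eq_nil_of_length_eq_zero (by omega)
    have hV : V = [] := by
      have := Nat.le_zero.mp hlen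
      exact List.eq_nil_of_length_eq_zero (by omega)
    subst hU; subst hV
    exact ⟨[], [], [], pal_nil, pal_nil, by simp, by simp [FreeGroup.mul_mk]⟩
  | succ n ih =>
    intro U V hlen hchU hchV hpU hpV
    by_cases hUV : Ch (U ++ V)
    · refine ⟨[], U, V, hpU, hpV, ?_, ?_⟩
      · simpa using hUV
      · rw [FreeGroup.mul_mk]
        simp
    · -- there is cancellation at the boundary
      have hbd : ¬ ∀ x ∈ U.getLast?, ∀ y ∈ V.head?, y ≠ st x := by
        intro hb
        exact hUV (ch_append hchU hchV hb)
      push_neg at hbd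
      obtain ⟨x, hx, y, hy, hyx⟩ := hbd
      rcases U with _ | ⟨u0, Ut⟩
      · simp at hx
      rcases V with _ | ⟨v0, Vt⟩
      · simp at hy
      simp only [List.head?_cons, Option.mem_def, Option.some.injEq] at hy
      subst hy
      rcases Ut with _ | ⟨u1, Ut'⟩
      · -- U = [u0]
        simp only [List.getLast?_singleton, Option.mem_def, Option.some.injEq] at hx
        subst hx
        subst hyx
        rcases Vt with _ | ⟨v1, Vt'⟩
        · -- V = [st u0]
          refine ⟨[], [], [], pal_nil, pal_nil, by simp, ?_⟩
          rw [FreeGroup.mul_mk]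
          have h1 := mk_cancel [] [] u0
          simp only [List.append_assoc, List.cons_append, List.nil_append,
            List.append_nil, invRev_nil] at h1 ⊢
          exact h1
        · -- V = st u0 :: M ++ [st u0]
          obtain ⟨q, M, hVdec, hMpal⟩ := pal_decomp hpV (by simp)
          have hq : q = st u0 := by
            have := congrArg List.head? hVdec
            simpa using this.symm
          subst hq
          refine ⟨[], M, [st u0], hMpal, pal_singleton _, ?_, ?_⟩
          · simp only [invRev_nil, List.append_nil, List.nil_append]
            refine ch_infix hchV ⟨[st u0], [], ?_⟩
            simp [hVdec]
          · rw [FreeGroup.mul_mk, hVdec]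
            have h1 := mk_cancel [] (M ++ st u0 :: []) u0
            simp only [List.append_assoc, List.cons_append, List.nil_append,
              List.append_nil, invRev_nil] at h1 ⊢
            exact h1
      · -- U has length ≥ 2
        have hxu0 : u0 = x := by
          have hgl := pal_getLast? hpU
          rw [hgl] at hx
          simpa using hx
        subst hxu0
        subst hyx
        rcases Vt with _ | ⟨v1, Vt'⟩
        · -- V = [st u0], U = u0 :: M ++ [u0]
          obtain ⟨q, M, hUdec, hMpal⟩ := pal_decomp hpU (by simp)
          have hq : u0 = q := by
            have := congrArg List.head? hUdec
            simpa using this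
          subst hq
          refine ⟨[], [u0], M, pal_singleton _, hMpal, ?_, ?_⟩
          · simp only [invRev_nil, List.append_nil, List.nil_append]
            refine ch_infix hchU ⟨[], [u0], ?_⟩
            simp [hUdec]
          · rw [FreeGroup.mul_mk, hUdec]
            have h1 := mk_cancel (u0 :: M) [] u0
            simp only [List.append_assoc, List.cons_append, List.nil_append,
              List.append_nil, invRev_nil] at h1 ⊢
            exact h1
        · -- both length ≥ 2
          obtain ⟨q1, M₁, hUdec, hM1pal⟩ := pal_decomp hpU (by simp)
          have hq1 : u0 = q1 := by
            have := congrArg List.head? hUdec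
            simpa using this
          subst hq1
          obtain ⟨q2, M₂, hVdec, hM2pal⟩ := pal_decomp hpV (by simp)
          have hq2 : q2 = st u0 := by
            have := congrArg List.head? hVdec
            simpa using this.symm
          subst hq2
          have hchM1 : Ch M₁ := by
            refine ch_infix hchU ⟨[u0], [u0], ?_⟩
            simp [hUdec]
          have hchM2 : Ch M₂ := by
            refine ch_infix hchV ⟨[st u0], [st u0], ?_⟩
            simp [hVdec]
          have hlen' : M₁.length + M₂.length ≤ n := by
            have h1 := congrArg List.length hUdec
            have h2 := congrArg List.length hVdec
            simp at h1 h2 hlen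
            omega
          obtain ⟨A, P, Q, hPpal, hQpal, hchW, hmkeq⟩ :=
            ih M₁ M₂ hlen' hchM1 hchM2 hM1pal hM2pal
          obtain ⟨A', P', Q', hP'pal, hQ'pal, hchW', hconjeq⟩ :=
            conj u0 hchW hPpal hQpal
          refine ⟨A', P', Q', hP'pal, hQ'pal, hchW', ?_⟩
          rw [hUdec, hVdec, FreeGroup.mul_mk]
          have c1 := mk_cancel (u0 :: M₁) (M₂ ++ [st u0]) u0
          simp only [List.append_assoc, List.cons_append, List.nil_append,
            List.append_nil] at c1 ⊢
          rw [c1]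
          have hmkeq' : FreeGroup.mk (M₁ ++ M₂) =
              FreeGroup.mk (A ++ P ++ Q ++ FreeGroup.invRev A) := by
            rw [← FreeGroup.mul_mk]; exact hmkeq
          have hassoc : u0 :: (M₁ ++ (M₂ ++ [st u0])) = [u0] ++ ((M₁ ++ M₂) ++ [st u0]) := by
            simp
          rw [hassoc, ← FreeGroup.mul_mk, ← FreeGroup.mul_mk, hmkeq',
            FreeGroup.mul_mk, FreeGroup.mul_mk]
          simp only [List.append_assoc] at hconjeq ⊢
          exact hconjeq

theorem stmt15' {α : Type*} [DecidableEq α] (x : FreeGroup α) :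
    (∃ u v : FreeGroup α, GPal u ∧ GPal v ∧ x = u * v) ↔
    (∃ A P Q : List (α × Bool), Red A ∧ Red P ∧ Red Q ∧ Pal P ∧ Pal Q ∧
      x.toWord = A ++ P ++ Q ++ FreeGroup.invRev A) := by
  constructor
  · rintro ⟨u, v, hu, hv, rfl⟩
    obtain ⟨A, P, Q, hPpal, hQpal, hchW, hmkeq⟩ :=
      key (u.toWord.length + v.toWord.length) u.toWord v.toWord le_rfl
        (ch_toWord u) (ch_toWord v) hu hv
    have hmkuv : FreeGroup.mk u.toWord * FreeGroup.mk v.toWord = u * v := by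
      rw [FreeGroup.mk_toWord, FreeGroup.mk_toWord]
    have hW : (u * v).toWord = A ++ P ++ Q ++ FreeGroup.invRev A :=
      toWord_eq_of hchW (by rw [← hmkeq, hmkuv])
    refine ⟨A, P, Q, ?_, ?_, ?_, hPpal, hQpal, hW⟩
    · exact red_iff_ch.mpr (ch_infix hchW ⟨[], P ++ (Q ++ FreeGroup.invRev A), by simp⟩)
    · exact red_iff_ch.mpr (ch_infix hchW ⟨A, Q ++ FreeGroup.invRev A, by simp⟩)
    · exact red_iff_ch.mpr (ch_infix hchW ⟨A ++ P, FreeGroup.invRev A, by simp⟩)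
  · rintro ⟨A, P, Q, hRA, hRP, hRQ, hPpal, hQpal, hx⟩
    have hch : Ch (A ++ P ++ Q ++ FreeGroup.invRev A) := by
      rw [← hx]; exact ch_toWord x
    have hchA : Ch A := ch_infix hch ⟨[], P ++ (Q ++ FreeGroup.invRev A), by simp⟩
    have hchP : Ch P := ch_infix hch ⟨A, Q ++ FreeGroup.invRev A, by simp⟩
    have hchQ : Ch Q := ch_infix hch ⟨A ++ P, FreeGroup.invRev A, by simp⟩
    -- the boundary facts
    have hch2 : Ch (A ++ (P ++ (Q ++ FreeGroup.invRev A))) := by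
      simpa [List.append_assoc] using hch
    rw [ch_append_iff] at hch2
    obtain ⟨_, _, bdA⟩ := hch2
    have hch3 : Ch ((A ++ P ++ Q) ++ FreeGroup.invRev A) := hch
    rw [ch_append_iff] at hch3
    obtain ⟨_, _, bdZ⟩ := hch3
    -- the two palindromic factors
    have hchU : Ch (A ++ P ++ A.reverse) := by
      refine ch_append (ch_infix hch ⟨[], Q ++ FreeGroup.invRev A, by simp⟩)
        (ch_reverse hchA) ?_
      intro z hz w hw
      rw [List.head?_reverse] at hw
      rcases hAe : A with _ | ⟨a0, At⟩
      · rw [hAe] at hw; simp at hw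
      rcases hPe : P with _ | ⟨p0, Pt⟩
      · rw [hPe] at hz
        simp only [List.append_nil] at hz
        have hzw : w = z := by
          rw [Option.mem_def] at hz hw
          rw [hw] at hz
          exact (Option.some.injEq _ _).mp hz
        subst hzw
        exact ne_st w
      · rw [hPe] at hz
        have hplast : (p0 :: Pt).getLast? = some p0 := by
          rw [pal_getLast? (hPe ▸ hPpal)]; rfl
        have hzp : p0 = z := by
          rw [Option.mem_def, List.getLast?_append, hplast] at hz
          simpa using hz
        subst hzp
        have := bdA w hw p0 (by rw [hPe]; rfl)
        exact st_swap_ne.mp this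
    have hchV : Ch (A.map st ++ Q ++ (A.map st).reverse) := by
      have hQA : ∀ la ∈ A.getLast?, ∀ hq ∈ Q.head?, hq ≠ la := by
        intro la hla hq hhq hctr
        subst hctr
        have hglQ : Q.getLast? = some hq := by rw [pal_getLast? hQpal]; exact hhq
        have hgl : (A ++ P ++ Q).getLast? = some hq := by
          rw [List.getLast?_append, List.getLast?_append, hglQ]; rfl
        have hinv : (FreeGroup.invRev A).head? = some (st hq) := by
          rw [invRev_head?, hla]; rfl
        exact bdZ hq hgl (st hq) hinv (by simp)
      refine ch_append (ch_append (ch_map_st hchA) hchQ ?_)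
        (ch_reverse (ch_map_st hchA)) ?_
      · intro z hz w hw
        rw [Option.mem_def, List.getLast?_map] at hz
        rcases hAl : A.getLast? with _ | la
        · rw [hAl] at hz; simp at hz
        rw [hAl] at hz
        have hzst : st la = z := by simpa using hz
        subst hzst
        simp only [st_st]
        exact hQA la (by rw [hAl]; rfl) w hw
      · intro z hz w hw
        rw [List.head?_reverse, Option.mem_def, List.getLast?_map] at hw
        rcases hAl : A.getLast? with _ | la
        · rw [hAl] at hw; simp at hw
        rw [hAl] at hw
        have hwst : st la = w := by simpa using hw
        subst hwst
        rcases hQe : Q with _ | ⟨q0, Qt⟩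
        · rw [hQe] at hz
          simp only [List.append_nil, Option.mem_def, List.getLast?_map] at hz
          rw [hAl] at hz
          have hzst : st la = z := by simpa using hz
          subst hzst
          simp
        · rw [hQe] at hz
          have hqlast : (q0 :: Qt).getLast? = some q0 := by
            rw [pal_getLast? (hQe ▸ hQpal)]; rfl
          have hzq : q0 = z := by
            rw [Option.mem_def, List.getLast?_append, hqlast] at hz
            simpa using hz
          subst hzq
          intro hctr
          have : q0 = la := by simpa using (congrArg st hctr).symm
          exact hQA la (by rw [hAl]; rfl) q0 (by rw [hQe]; rfl) this
    have hpalU : Pal (A ++ P ++ A.reverse) := by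
      unfold Pal
      rw [Pal] at hPpal
      simp [List.reverse_append, hPpal, List.append_assoc]
    have hpalV : Pal (A.map st ++ Q ++ (A.map st).reverse) := by
      unfold Pal
      rw [Pal] at hQpal
      simp [List.reverse_append, hQpal, List.append_assoc]
    refine ⟨FreeGroup.mk (A ++ P ++ A.reverse),
      FreeGroup.mk (A.map st ++ Q ++ (A.map st).reverse), ?_, ?_, ?_⟩
    · show Pal _
      rw [toWord_eq_of hchU rfl]
      exact hpalU
    · show Pal _
      rw [toWord_eq_of hchV rfl]
      exact hpalV
    · have hxmk : x = FreeGroup.mk (A ++ P ++ Q ++ FreeGroup.invRev A) := by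
        rw [← hx, FreeGroup.mk_toWord]
      rw [hxmk]
      simp only [← FreeGroup.mul_mk]
      have h1 : FreeGroup.mk (A.map st) = (FreeGroup.mk A.reverse)⁻¹ := by
        rw [FreeGroup.inv_mk]
        congr 1
        simp [invRev_eq']
      have h2 : FreeGroup.mk (FreeGroup.invRev A) = (FreeGroup.mk A)⁻¹ := by
        rw [FreeGroup.inv_mk]
      have h3 : FreeGroup.mk ((A.map st).reverse) = (FreeGroup.mk A)⁻¹ := by
        rw [FreeGroup.inv_mk]
        congr 1
      rw [h1, h2, h3]
      group

end Pal15

theorem stmt15 {α : Type*} [DecidableEq α] (x : FreeGroup α) :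
    (∃ u v : FreeGroup α, GPal u ∧ GPal v ∧ x = u * v) ↔
    (∃ A P Q : List (α × Bool), Red A ∧ Red P ∧ Red Q ∧ Pal P ∧ Pal Q ∧
      x.toWord = A ++ P ++ Q ++ FreeGroup.invRev A) :=
  Pal15.stmt15' x
end

section
/- An element of a free group is a product of at most three palindromes if and only if its reduced form is a concatenation of the form A·B·P·Q·B⁻¹·R·Ā or of the form A·P·B·Q·R·B⁻¹·Ā, where P, Q, R are (possibly empty) palindromic reduced words, A and B are reduced words, and Ā denotes the mirror image (reverse) of A. -/
namespace Stmt16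
open FreeGroup List

variable {α : Type*} [DecidableEq α]

/-- non-cancelling pair of letters -/
def NC (p q : α × Bool) : Prop := ¬ (p.1 = q.1 ∧ p.2 = !q.2)

theorem reduce_length_le (L : List (α × Bool)) : (reduce L).length ≤ L.length :=
  (FreeGroup.Red.sublist FreeGroup.reduce.red).length_le

theorem reduce_eq_self_iff (L : List (α × Bool)) :
    reduce L = L ↔ List.Chain' NC L := by
  induction L with
  | nil => simp [List.Chain', List.isChain_nil]
  | cons x L ih =>
    cases hr : reduce L with
    | nil =>
      rw [reduce.cons, hr]
      simp only
      constructor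
      · intro h
        have hL : L = [] := by injection h with _ h2; exact h2.symm
        subst hL; exact List.isChain_singleton _
      · intro h
        have hL : L = [] := (ih.2 h.tail).symm.trans hr
        subst hL; rfl
    | cons y t =>
      rw [reduce.cons, hr]
      simp only
      by_cases hnc : x.1 = y.1 ∧ x.2 = !y.2
      · rw [if_pos hnc]
        constructor
        · intro h
          exfalso
          have h1 : t.length = L.length + 1 := by
            have := congrArg List.length h; simpa using this
          have h2 : (y :: t).length ≤ L.length := by
            rw [← hr]; exact reduce_length_le L
          simp at h2; omega
        · intro h
          exfalso
          have hL : reduce L = L := ih.2 h.tail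
          rw [hL] at hr
          subst hr
          exact (List.isChain_cons_cons.1 h).1 hnc
      · rw [if_neg hnc]
        constructor
        · intro h
          have hL : L = y :: t := by injection h with _ h2; exact h2.symm
          subst hL
          exact List.isChain_cons_cons.2 ⟨hnc, ih.1 hr⟩
        · intro h
          have hL : reduce L = L := ih.2 h.tail
          rw [hL] at hr
          rw [hr]

theorem red_iff_chain (L : List (α × Bool)) : _root_.Red L ↔ List.Chain' NC L := by
  unfold _root_.Red
  rw [toWord_mk]
  exact reduce_eq_self_iff L

theorem chain_toWord (x : FreeGroup α) : List.Chain' NC x.toWord :=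
  (reduce_eq_self_iff _).1 (reduce_toWord x)

theorem red_toWord (x : FreeGroup α) : _root_.Red x.toWord := by
  unfold _root_.Red; rw [mk_toWord]

/-- letter inverse -/
def linv (p : α × Bool) : α × Bool := (p.1, !p.2)

theorem NC_comm {p q : α × Bool} : NC p q ↔ NC q p := by
  unfold NC
  constructor <;>
  · rintro h ⟨h1, h2⟩
    exact h ⟨h1.symm, by cases hp : p.2 <;> cases hq : q.2 <;> simp_all⟩

theorem chain_reverse {L : List (α × Bool)} (h : List.Chain' NC L) :
    List.Chain' NC L.reverse := by
  unfold List.Chain' at *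
  rw [List.isChain_reverse]
  exact h.imp fun a b hab => NC_comm.1 hab

theorem NC_linv {p q : α × Bool} (h : NC p q) : NC (linv p) (linv q) := by
  unfold NC linv at *
  rintro ⟨h1, h2⟩
  exact h ⟨h1, by cases hp : p.2 <;> cases hq : q.2 <;> simp_all⟩

theorem chain_map_linv {L : List (α × Bool)} (h : List.Chain' NC L) :
    List.Chain' NC (L.map linv) := by
  unfold List.Chain' at *
  rw [List.isChain_map]
  exact h.imp fun a b hab => NC_linv hab

/-! ### The reversal anti-automorphism -/

/-- reversal (mirror) of a free group element -/
def rho (x : FreeGroup α) : FreeGroup α :=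
  (FreeGroup.lift (fun i => MulOpposite.op (FreeGroup.of i)) x).unop

theorem rho_mul (x y : FreeGroup α) : rho (x * y) = rho y * rho x := by
  unfold rho; rw [MonoidHom.map_mul]; rfl

theorem rho_one : rho (1 : FreeGroup α) = 1 := by
  unfold rho; rw [MonoidHom.map_one]; rfl

theorem rho_inv (x : FreeGroup α) : rho x⁻¹ = (rho x)⁻¹ := by
  unfold rho; rw [MonoidHom.map_inv]; rfl

theorem rho_of (a : α) : rho (FreeGroup.of a) = FreeGroup.of a := by
  unfold rho; rw [FreeGroup.lift_apply_of]; rfl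

theorem rho_mk (L : List (α × Bool)) : rho (mk L) = mk L.reverse := by
  induction L with
  | nil => simp only [List.reverse_nil, ← one_eq_mk, rho_one]
  | cons p L ih =>
    have h1 : mk (p :: L) = mk [p] * mk L := by rw [mul_mk]; rfl
    have hsing : rho (mk [p]) = mk [p] := by
      rcases p with ⟨a, b⟩
      cases b
      · have : (mk [(a, false)] : FreeGroup α) = (FreeGroup.of a)⁻¹ := by
          rw [show (FreeGroup.of a : FreeGroup α) = mk [(a, true)] from rfl, inv_mk]
          rfl
        rw [this, rho_inv, rho_of, ← this]
      · rw [show (mk [(a, true)] : FreeGroup α) = FreeGroup.of a from rfl, rho_of]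
    rw [h1, rho_mul, ih, hsing, mul_mk]
    simp

theorem toWord_rho (x : FreeGroup α) : (rho x).toWord = x.toWord.reverse := by
  conv_lhs => rw [← mk_toWord (x := x)]
  rw [rho_mk, toWord_mk]
  exact (reduce_eq_self_iff _).2 (chain_reverse (chain_toWord x))

theorem rho_rho (x : FreeGroup α) : rho (rho x) = x := by
  apply toWord_injective
  rw [toWord_rho, toWord_rho, List.reverse_reverse]

theorem gpal_iff {x : FreeGroup α} : GPal x ↔ rho x = x := by
  unfold GPal
  rw [← toWord_inj, toWord_rho]

theorem norm_rho (x : FreeGroup α) : FreeGroup.norm (rho x) = FreeGroup.norm x := by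
  unfold FreeGroup.norm; rw [toWord_rho, List.length_reverse]

/-! ### letters, splitting lemmas -/

/-- word length of a free group element -/
def nw (x : FreeGroup α) : ℕ := x.toWord.length

theorem nw_eq_norm (x : FreeGroup α) : nw x = FreeGroup.norm x := rfl

theorem nw_mul_le (x y : FreeGroup α) : nw (x * y) ≤ nw x + nw y := by
  rw [nw_eq_norm, nw_eq_norm, nw_eq_norm]; exact FreeGroup.norm_mul_le x y

theorem nw_rho (x : FreeGroup α) : nw (rho x) = nw x := by
  rw [nw_eq_norm, nw_eq_norm]; exact norm_rho x

theorem nw_inv (x : FreeGroup α) : nw x⁻¹ = nw x := by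
  rw [nw_eq_norm, nw_eq_norm]; exact FreeGroup.norm_inv_eq

theorem nw_one : nw (1 : FreeGroup α) = 0 := by
  unfold nw; rw [toWord_one]; rfl

theorem nw_eq_zero {x : FreeGroup α} : nw x = 0 ↔ x = 1 := by
  rw [nw_eq_norm]; exact FreeGroup.norm_eq_zero

theorem toWord_mk_of_chain {L : List (α × Bool)} (h : List.Chain' NC L) :
    (mk L).toWord = L := by
  rw [toWord_mk]; exact (reduce_eq_self_iff L).2 h

theorem toWord_single (γ : α × Bool) : (mk [γ]).toWord = [γ] := by
  rw [toWord_mk]; rfl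

theorem nw_single (γ : α × Bool) : nw (mk [γ] : FreeGroup α) = 1 := by
  unfold nw; rw [toWord_single]; rfl

theorem gpal_single (γ : α × Bool) : GPal (mk [γ] : FreeGroup α) := by
  unfold GPal; rw [toWord_single]; rfl

theorem gpal_one : GPal (1 : FreeGroup α) := by
  unfold GPal; rw [toWord_one]; rfl

theorem rho_single (γ : α × Bool) : rho (mk [γ] : FreeGroup α) = mk [γ] := by
  rw [rho_mk]; rfl

theorem inv_single (s : α) (d : Bool) :
    (mk [(s, d)] : FreeGroup α)⁻¹ = mk [(s, !d)] := by
  rw [inv_mk]; rfl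

theorem gpal_sandwich {q : FreeGroup α} (hq : GPal q) (γ : α × Bool) :
    GPal (mk [γ] * q * mk [γ]) := by
  rw [gpal_iff] at hq ⊢
  rw [rho_mul, rho_mul, rho_single, hq, mul_assoc]

theorem nw_sandwich_le (q : FreeGroup α) (γ δ : α × Bool) :
    nw (mk [γ] * q * mk [δ]) ≤ nw q + 2 := by
  calc nw (mk [γ] * q * mk [δ]) ≤ nw (mk [γ] * q) + nw (mk [δ]) := nw_mul_le _ _
    _ ≤ nw (mk [γ]) + nw q + nw (mk [δ]) := by
        have := nw_mul_le (mk [γ] : FreeGroup α) q; omega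
    _ = nw q + 2 := by rw [nw_single, nw_single]; omega

/-- split an element whose word ends with a given letter -/
theorem split_right {g : FreeGroup α} {G₁ : List (α × Bool)} {γ : α × Bool}
    (h : g.toWord = G₁ ++ [γ]) :
    ∃ g₁ : FreeGroup α, g₁.toWord = G₁ ∧ g = g₁ * mk [γ] ∧ nw g = nw g₁ + 1 := by
  have hch : List.Chain' NC (G₁ ++ [γ]) := h ▸ chain_toWord g
  have hch1 : List.Chain' NC G₁ := (List.isChain_append.1 hch).1
  refine ⟨mk G₁, toWord_mk_of_chain hch1, ?_, ?_⟩
  · conv_lhs => rw [← mk_toWord (x := g)]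
    rw [h, mul_mk]
  · unfold nw
    rw [h, toWord_mk_of_chain hch1]
    simp

/-- split an element whose word starts with a given letter -/
theorem split_left {g : FreeGroup α} {G₁ : List (α × Bool)} {γ : α × Bool}
    (h : g.toWord = γ :: G₁) :
    ∃ g₁ : FreeGroup α, g₁.toWord = G₁ ∧ g = mk [γ] * g₁ ∧ nw g = nw g₁ + 1 := by
  have hch : List.Chain' NC (γ :: G₁) := h ▸ chain_toWord g
  have hch1 : List.Chain' NC G₁ := hch.tail
  refine ⟨mk G₁, toWord_mk_of_chain hch1, ?_, ?_⟩
  · conv_lhs => rw [← mk_toWord (x := g)]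
    rw [show γ :: G₁ = [γ] ++ G₁ from rfl] at h
    rw [h, mul_mk]
  · unfold nw
    rw [h, toWord_mk_of_chain hch1]
    simp

/-- a nonempty palindromic element: head equals last -/
theorem gpal_head_cases {p : FreeGroup α} (hp : GPal p) {γ : α × Bool}
    {rest : List (α × Bool)} (h : p.toWord = γ :: rest) :
    p.toWord = [γ] ∨
    ∃ P₁, ∃ p₁ : FreeGroup α, p.toWord = γ :: (P₁ ++ [γ]) ∧ p₁.toWord = P₁ ∧ GPal p₁ ∧
        p = mk [γ] * p₁ * mk [γ] ∧ nw p = nw p₁ + 2 := by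
  rcases List.eq_nil_or_concat rest with hrest | ⟨P₁, δ, hrest⟩
  · left; rw [h, hrest]
  · right
    rw [List.concat_eq_append] at hrest
    subst hrest
    have h2 : (γ :: (P₁ ++ [δ])).reverse = γ :: (P₁ ++ [δ]) := by
      rw [← h]; exact hp
    rw [List.reverse_cons, List.reverse_append] at h2
    simp only [List.reverse_singleton, List.singleton_append, List.cons_append] at h2
    have hδ : δ = γ := by injection h2
    subst hδ
    have hpal : P₁.reverse = P₁ := by
      have h3 : P₁.reverse ++ [δ] = P₁ ++ [δ] := by injection h2
      exact List.append_cancel_right h3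
    have hch : List.Chain' NC ([δ] ++ (P₁ ++ [δ])) := by
      have := chain_toWord p
      rw [h] at this
      exact this
    have hch1 : List.Chain' NC P₁ := by
      have := (List.isChain_append.1 hch).2.1
      exact (List.isChain_append.1 this).1
    refine ⟨P₁, mk P₁, h, toWord_mk_of_chain hch1, ?_, ?_, ?_⟩
    · unfold GPal
      rw [toWord_mk_of_chain hch1]; exact hpal
    · conv_lhs => rw [← mk_toWord (x := p)]
      rw [h, show δ :: (P₁ ++ [δ]) = [δ] ++ P₁ ++ [δ] by simp, mul_mk, mul_mk]
    · unfold nw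
      rw [h, toWord_mk_of_chain hch1]
      simp

/-! ### expressions -/

def Meas (a b p q r : FreeGroup α) : ℕ := 2 * nw a + 2 * nw b + nw p + nw q + nw r

def Expr1 (x a b p q r : FreeGroup α) : Prop :=
  GPal p ∧ GPal q ∧ GPal r ∧ x = a * b * p * q * b⁻¹ * r * rho a

def Expr2 (x a b p q r : FreeGroup α) : Prop :=
  GPal p ∧ GPal q ∧ GPal r ∧ x = a * p * b * q * r * b⁻¹ * rho a

def Goal (x : FreeGroup α) : Prop :=
  (∃ A B P Q R : List (α × Bool), _root_.Red A ∧ _root_.Red B ∧ _root_.Red P ∧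
      _root_.Red Q ∧ _root_.Red R ∧ Pal P ∧ Pal Q ∧ Pal R ∧
      x.toWord = A ++ B ++ P ++ Q ++ FreeGroup.invRev B ++ R ++ A.reverse) ∨
  (∃ A B P Q R : List (α × Bool), _root_.Red A ∧ _root_.Red B ∧ _root_.Red P ∧
      _root_.Red Q ∧ _root_.Red R ∧ Pal P ∧ Pal Q ∧ Pal R ∧
      x.toWord = A ++ P ++ B ++ Q ++ R ++ FreeGroup.invRev B ++ A.reverse)

theorem gpal_rho_eq {p : FreeGroup α} (hp : GPal p) : rho p = p := gpal_iff.1 hp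

theorem expr1_to_expr2_rho {x a b p q r : FreeGroup α} (h : Expr1 x a b p q r) :
    Expr2 (rho x) a ((rho b)⁻¹) r q p ∧
      Meas a ((rho b)⁻¹) r q p = Meas a b p q r := by
  obtain ⟨hp, hq, hr, hx⟩ := h
  constructor
  · refine ⟨hr, hq, hp, ?_⟩
    rw [hx]
    simp only [rho_mul, rho_inv, rho_rho, gpal_rho_eq hp, gpal_rho_eq hq, gpal_rho_eq hr,
      inv_inv, mul_assoc]
  · simp only [Meas, nw_inv, nw_rho]; omega

theorem expr2_to_expr1_rho {x a b p q r : FreeGroup α} (h : Expr2 x a b p q r) :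
    Expr1 (rho x) a ((rho b)⁻¹) r q p ∧
      Meas a ((rho b)⁻¹) r q p = Meas a b p q r := by
  obtain ⟨hp, hq, hr, hx⟩ := h
  constructor
  · refine ⟨hr, hq, hp, ?_⟩
    rw [hx]
    simp only [rho_mul, rho_inv, rho_rho, gpal_rho_eq hp, gpal_rho_eq hq, gpal_rho_eq hr,
      inv_inv, mul_assoc]
  · simp only [Meas, nw_inv, nw_rho]; omega

theorem x_eq_mk_of_expr1 {x a b p q r : FreeGroup α} (h : Expr1 x a b p q r) :
    x = mk (a.toWord ++ b.toWord ++ p.toWord ++ q.toWord ++ FreeGroup.invRev b.toWord ++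
      r.toWord ++ a.toWord.reverse) := by
  obtain ⟨_, _, _, hx⟩ := h
  rw [hx]
  conv_lhs =>
    rw [show (b : FreeGroup α)⁻¹ = mk (FreeGroup.invRev b.toWord) by
          rw [← inv_mk, mk_toWord],
        show rho a = mk a.toWord.reverse by rw [← rho_mk, mk_toWord]]
    rw [← mk_toWord (x := a), ← mk_toWord (x := b), ← mk_toWord (x := p),
      ← mk_toWord (x := q), ← mk_toWord (x := r)]
  simp only [mul_mk, toWord_mk, reduce_toWord]

theorem x_eq_mk_of_expr2 {x a b p q r : FreeGroup α} (h : Expr2 x a b p q r) :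
    x = mk (a.toWord ++ p.toWord ++ b.toWord ++ q.toWord ++ r.toWord ++
      FreeGroup.invRev b.toWord ++ a.toWord.reverse) := by
  obtain ⟨_, _, _, hx⟩ := h
  rw [hx]
  conv_lhs =>
    rw [show (b : FreeGroup α)⁻¹ = mk (FreeGroup.invRev b.toWord) by
          rw [← inv_mk, mk_toWord],
        show rho a = mk a.toWord.reverse by rw [← rho_mk, mk_toWord]]
    rw [← mk_toWord (x := a), ← mk_toWord (x := b), ← mk_toWord (x := p),
      ← mk_toWord (x := q), ← mk_toWord (x := r)]
  simp only [mul_mk, toWord_mk, reduce_toWord]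

theorem finish1 {x a b p q r : FreeGroup α} (h : Expr1 x a b p q r)
    (hch : List.Chain' NC (a.toWord ++ b.toWord ++ p.toWord ++ q.toWord ++
      FreeGroup.invRev b.toWord ++ r.toWord ++ a.toWord.reverse)) : Goal x := by
  have hmk := x_eq_mk_of_expr1 h
  obtain ⟨hp, hq, hr, _⟩ := h
  left
  refine ⟨a.toWord, b.toWord, p.toWord, q.toWord, r.toWord,
    red_toWord a, red_toWord b, red_toWord p, red_toWord q, red_toWord r,
    hp, hq, hr, ?_⟩
  rw [hmk, toWord_mk_of_chain hch]

theorem finish2 {x a b p q r : FreeGroup α} (h : Expr2 x a b p q r)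
    (hch : List.Chain' NC (a.toWord ++ p.toWord ++ b.toWord ++ q.toWord ++
      r.toWord ++ FreeGroup.invRev b.toWord ++ a.toWord.reverse)) : Goal x := by
  have hmk := x_eq_mk_of_expr2 h
  obtain ⟨hp, hq, hr, _⟩ := h
  right
  refine ⟨a.toWord, b.toWord, p.toWord, q.toWord, r.toWord,
    red_toWord a, red_toWord b, red_toWord p, red_toWord q, red_toWord r,
    hp, hq, hr, ?_⟩
  rw [hmk, toWord_mk_of_chain hch]

theorem linv_linv (p : α × Bool) : linv (linv p) = p := by
  cases p with
  | mk s d => simp [linv]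

theorem invRev_eq_reverse_map (B : List (α × Bool)) :
    FreeGroup.invRev B = (B.map linv).reverse := rfl

theorem red_map_linv {B : List (α × Bool)} (h : _root_.Red B) :
    _root_.Red (B.map linv) := by
  rw [red_iff_chain] at h ⊢
  exact chain_map_linv h

theorem red_reverse {B : List (α × Bool)} (h : _root_.Red B) :
    _root_.Red B.reverse := by
  rw [red_iff_chain] at h ⊢
  exact chain_reverse h

theorem map_linv_linv (B : List (α × Bool)) : List.map (linv ∘ linv) B = B := by
  induction B with
  | nil => rfl
  | cons a t ih => simp [ih, linv_linv a]

theorem goal_rho {x : FreeGroup α} (h : Goal (rho x)) : Goal x := by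
  have hxw : x.toWord = (rho x).toWord.reverse := by
    conv_lhs => rw [← rho_rho x]
    rw [toWord_rho]
  rcases h with ⟨A, B, P, Q, R, hA, hB, hP, hQ, hR, hPp, hPq, hPr, heq⟩ |
    ⟨A, B, P, Q, R, hA, hB, hP, hQ, hR, hPp, hPq, hPr, heq⟩
  · right
    have hp' : P.reverse = P := hPp
    have hq' : Q.reverse = Q := hPq
    have hr' : R.reverse = R := hPr
    refine ⟨A, B.map linv, R, Q, P, hA, red_map_linv hB, hR, hQ, hP, hPr, hPq, hPp, ?_⟩
    rw [hxw, heq]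
    rw [invRev_eq_reverse_map, invRev_eq_reverse_map]
    simp only [List.reverse_append, List.reverse_reverse, List.map_map]
    simp only [map_linv_linv, hp', hq', hr', List.append_assoc]
  · left
    have hp' : P.reverse = P := hPp
    have hq' : Q.reverse = Q := hPq
    have hr' : R.reverse = R := hPr
    refine ⟨A, B.map linv, R, Q, P, hA, red_map_linv hB, hR, hQ, hP, hPr, hPq, hPp, ?_⟩
    rw [hxw, heq]
    rw [invRev_eq_reverse_map, invRev_eq_reverse_map]
    simp only [List.reverse_append, List.reverse_reverse, List.map_map]
    simp only [map_linv_linv, hp', hq', hr', List.append_assoc]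

/-! ### output of a reduction step -/

def Out (x : FreeGroup α) (n : ℕ) : Prop :=
  (∃ a b p q r, Expr1 x a b p q r ∧ Meas a b p q r < n) ∨
  (∃ a b p q r, Expr1 (rho x) a b p q r ∧ Meas a b p q r < n)

theorem out_of_expr1 {x a b p q r : FreeGroup α} {n : ℕ} (h : Expr1 x a b p q r)
    (hm : Meas a b p q r < n) : Out x n := Or.inl ⟨a, b, p, q, r, h, hm⟩

theorem out_of_expr2 {x a b p q r : FreeGroup α} {n : ℕ} (h : Expr2 x a b p q r)
    (hm : Meas a b p q r < n) : Out x n := by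
  obtain ⟨h1, h2⟩ := expr2_to_expr1_rho h
  exact Or.inr ⟨_, _, _, _, _, h1, h2.le.trans_lt hm⟩

theorem out_flip {x : FreeGroup α} {n : ℕ} (h : Out (rho x) n) : Out x n := by
  rcases h with h | h
  · exact Or.inr h
  · rw [rho_rho] at h
    exact Or.inl h

theorem single_inv (s : α) (d : Bool) :
    (mk [(s, !d)] : FreeGroup α) = (mk [(s, d)] : FreeGroup α)⁻¹ :=
  (inv_single s d).symm

/-- Move for a cancellation between `a` and `b` in a form-1 expression. -/
theorem moveF1ab {x a b p q r : FreeGroup α} {s : α} {d : Bool}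
    {A₁ B₁ : List (α × Bool)}
    (h : Expr1 x a b p q r) (ha : a.toWord = A₁ ++ [(s, d)])
    (hb : b.toWord = (s, !d) :: B₁) : Out x (Meas a b p q r) := by
  obtain ⟨hp, hq, hr, hx⟩ := h
  obtain ⟨a₁, -, hae, han⟩ := split_right ha
  obtain ⟨b₁, -, hbe, hbn⟩ := split_left hb
  refine out_of_expr1 (a := a₁) (b := b₁) (p := p) (q := q)
    (r := mk [(s, d)] * r * mk [(s, d)]) ⟨hp, hq, gpal_sandwich hr _, ?_⟩ ?_
  · rw [hx, hae, hbe, rho_mul, rho_single, single_inv]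
    group
  · have h1 := nw_sandwich_le r ((s, d)) ((s, d))
    simp only [Meas]
    omega

/-- Move for a cancellation between `b` and `p` in a form-1 expression. -/
theorem moveF1bp {x a b p q r : FreeGroup α} {s : α} {d : Bool}
    {B₁ : List (α × Bool)}
    (h : Expr1 x a b p q r) (hb : b.toWord = B₁ ++ [(s, d)])
    (hp : p.toWord.head? = some (s, !d)) : Out x (Meas a b p q r) := by
  obtain ⟨hpp, hq, hr, hx⟩ := h
  obtain ⟨rest, hpw⟩ := List.head?_eq_some_iff.1 hp
  obtain ⟨b₁, -, hbe, hbn⟩ := split_right hb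
  rcases gpal_head_cases hpp hpw with hps | ⟨P₁, p₁, hpw', hp₁w, hp₁, hpe, hpn⟩
  · -- p is a single letter
    have hpe : p = mk [(s, !d)] := by rw [← mk_toWord (x := p), hps]
    have hpn : nw p = 1 := by unfold nw; rw [hps]; rfl
    refine out_of_expr1 (a := a) (b := b₁) (p := q) (q := mk [(s, !d)]) (r := r)
      ⟨hq, gpal_single _, hr, ?_⟩ ?_
    · rw [hx, hbe, hpe, single_inv]
      group
    · simp only [Meas, nw_single]
      omega
  · -- p = c * p₁ * c with c = mk [(s,!d)]
    refine out_of_expr1 (a := a) (b := b₁) (p := p₁)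
      (q := mk [(s, !d)] * q * mk [(s, !d)]) (r := r)
      ⟨hp₁, gpal_sandwich hq _, hr, ?_⟩ ?_
    · rw [hx, hbe, hpe, single_inv]
      group
    · have h1 := nw_sandwich_le q ((s, !d)) ((s, !d))
      simp only [Meas]
      omega

/-- Move for a cancellation between `p` and `q` in a form-1 expression. -/
theorem moveF1pq {x a b p q r : FreeGroup α} {s : α} {d : Bool}
    (h : Expr1 x a b p q r) (hp : p.toWord.head? = some (s, d))
    (hq : q.toWord.head? = some (s, !d)) : Out x (Meas a b p q r) := by
  obtain ⟨hpp, hqq, hr, hx⟩ := h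
  obtain ⟨restp, hpw⟩ := List.head?_eq_some_iff.1 hp
  obtain ⟨restq, hqw⟩ := List.head?_eq_some_iff.1 hq
  rcases gpal_head_cases hpp hpw with hps | ⟨P₁, p₁, hpw', hp₁w, hp₁, hpe, hpn⟩ <;>
    rcases gpal_head_cases hqq hqw with hqs | ⟨Q₁, q₁, hqw', hq₁w, hq₁, hqe, hqn⟩
  · -- both single
    have hpe : p = mk [(s, d)] := by rw [← mk_toWord (x := p), hps]
    have hqe : q = mk [(s, !d)] := by rw [← mk_toWord (x := q), hqs]
    have hpn : nw p = 1 := by unfold nw; rw [hps]; rfl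
    have hqn : nw q = 1 := by unfold nw; rw [hqs]; rfl
    refine out_of_expr1 (a := a) (b := 1) (p := 1) (q := 1) (r := r)
      ⟨gpal_one, gpal_one, hr, ?_⟩ ?_
    · rw [hx, hpe, hqe, single_inv]
      group
    · simp only [Meas, nw_one]
      omega
  · -- p single, q long
    have hpe : p = mk [(s, d)] := by rw [← mk_toWord (x := p), hps]
    have hpn : nw p = 1 := by unfold nw; rw [hps]; rfl
    refine out_of_expr1 (a := a) (b := b) (p := q₁) (q := mk [(s, !d)]) (r := r)
      ⟨hq₁, gpal_single _, hr, ?_⟩ ?_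
    · rw [hx, hpe, hqe, single_inv]
      group
    · simp only [Meas, nw_single]
      omega
  · -- p long, q single
    have hqe : q = mk [(s, !d)] := by rw [← mk_toWord (x := q), hqs]
    have hqn : nw q = 1 := by unfold nw; rw [hqs]; rfl
    refine out_of_expr1 (a := a) (b := b) (p := mk [(s, d)]) (q := p₁) (r := r)
      ⟨gpal_single _, hp₁, hr, ?_⟩ ?_
    · rw [hx, hpe, hqe, single_inv]
      group
    · simp only [Meas, nw_single]
      omega
  · -- both long
    refine out_of_expr1 (a := a) (b := b * mk [(s, d)]) (p := p₁) (q := q₁) (r := r)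
      ⟨hp₁, hq₁, hr, ?_⟩ ?_
    · rw [hx, hpe, hqe, single_inv]
      group
    · have h1 : nw (b * mk [(s, d)]) ≤ nw b + 1 := by
        have := nw_mul_le b (mk [(s, d)])
        rw [nw_single] at this; exact this
      simp only [Meas]
      omega

/-- Move for a cancellation between `a` and `p` in a form-2 expression. -/
theorem moveF2ap {x a b p q r : FreeGroup α} {s : α} {d : Bool}
    {A₁ : List (α × Bool)}
    (h : Expr2 x a b p q r) (ha : a.toWord = A₁ ++ [(s, d)])
    (hp : p.toWord.head? = some (s, !d)) : Out x (Meas a b p q r) := by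
  obtain ⟨hpp, hq, hr, hx⟩ := h
  obtain ⟨rest, hpw⟩ := List.head?_eq_some_iff.1 hp
  obtain ⟨a₁, -, hae, han⟩ := split_right ha
  rcases gpal_head_cases hpp hpw with hps | ⟨P₁, p₁, hpw', hp₁w, hp₁, hpe, hpn⟩
  · -- p single letter
    have hpe : p = mk [(s, !d)] := by rw [← mk_toWord (x := p), hps]
    have hpn : nw p = 1 := by unfold nw; rw [hps]; rfl
    refine out_of_expr1 (a := a₁) (b := b) (p := q) (q := r) (r := mk [(s, d)])
      ⟨hq, hr, gpal_single _, ?_⟩ ?_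
    · rw [hx, hae, hpe, rho_mul, rho_single, single_inv]
      group
    · simp only [Meas, nw_single]
      omega
  · -- p long
    refine out_of_expr2 (a := a₁) (b := mk [(s, !d)] * b) (p := p₁) (q := q) (r := r)
      ⟨hp₁, hq, hr, ?_⟩ ?_
    · rw [hx, hae, hpe, rho_mul, rho_single, single_inv]
      group
    · have h1 : nw (mk [(s, !d)] * b) ≤ nw b + 1 := by
        have := nw_mul_le (mk [(s, !d)] : FreeGroup α) b
        rw [nw_single] at this; omega
      simp only [Meas]
      omega

/-- Move for a cancellation between `p` and `b` in a form-2 expression. -/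
theorem moveF2pb {x a b p q r : FreeGroup α} {s : α} {d : Bool}
    {B₁ : List (α × Bool)}
    (h : Expr2 x a b p q r) (hp : p.toWord.head? = some (s, d))
    (hb : b.toWord = (s, !d) :: B₁) : Out x (Meas a b p q r) := by
  obtain ⟨hpp, hq, hr, hx⟩ := h
  obtain ⟨rest, hpw⟩ := List.head?_eq_some_iff.1 hp
  obtain ⟨b₁, -, hbe, hbn⟩ := split_left hb
  rcases gpal_head_cases hpp hpw with hps | ⟨P₁, p₁, hpw', hp₁w, hp₁, hpe, hpn⟩
  · -- p single
    have hpe : p = mk [(s, d)] := by rw [← mk_toWord (x := p), hps]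
    have hpn : nw p = 1 := by unfold nw; rw [hps]; rfl
    refine out_of_expr1 (a := a) (b := b₁) (p := q) (q := r) (r := mk [(s, d)])
      ⟨hq, hr, gpal_single _, ?_⟩ ?_
    · rw [hx, hbe, hpe, single_inv]
      group
    · simp only [Meas, nw_single]
      omega
  · -- p long
    refine out_of_expr2 (a := a * mk [(s, d)]) (b := b₁) (p := p₁) (q := q) (r := r)
      ⟨hp₁, hq, hr, ?_⟩ ?_
    · rw [hx, hbe, hpe, rho_mul, rho_single, single_inv]
      group
    · have h1 : nw (a * mk [(s, d)]) ≤ nw a + 1 := by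
        have := nw_mul_le a (mk [(s, d)])
        rw [nw_single] at this; omega
      simp only [Meas]
      omega

/-- Move for a cancellation between `b` and `q` in a form-2 expression. -/
theorem moveF2bq {x a b p q r : FreeGroup α} {s : α} {d : Bool}
    {B₁ : List (α × Bool)}
    (h : Expr2 x a b p q r) (hb : b.toWord = B₁ ++ [(s, d)])
    (hq : q.toWord.head? = some (s, !d)) : Out x (Meas a b p q r) := by
  obtain ⟨hp, hqq, hr, hx⟩ := h
  obtain ⟨rest, hqw⟩ := List.head?_eq_some_iff.1 hq
  obtain ⟨b₁, -, hbe, hbn⟩ := split_right hb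
  rcases gpal_head_cases hqq hqw with hqs | ⟨Q₁, q₁, hqw', hq₁w, hq₁, hqe, hqn⟩
  · -- q single
    have hqe : q = mk [(s, !d)] := by rw [← mk_toWord (x := q), hqs]
    have hqn : nw q = 1 := by unfold nw; rw [hqs]; rfl
    refine out_of_expr2 (a := a) (b := b₁) (p := p) (q := r) (r := mk [(s, !d)])
      ⟨hp, hr, gpal_single _, ?_⟩ ?_
    · rw [hx, hbe, hqe, single_inv]
      group
    · simp only [Meas, nw_single]
      omega
  · -- q long
    refine out_of_expr2 (a := a) (b := b₁) (p := p) (q := q₁)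
      (r := mk [(s, !d)] * r * mk [(s, !d)]) ⟨hp, hq₁, gpal_sandwich hr _, ?_⟩ ?_
    · rw [hx, hbe, hqe, single_inv]
      group
    · have h1 := nw_sandwich_le r ((s, !d)) ((s, !d))
      simp only [Meas]
      omega

/-- Collapse `b * b⁻¹` in a form-1 expression with trivial `p, q`. -/
theorem collapse1 {x a b r : FreeGroup α}
    (h : Expr1 x a b 1 1 r) (hb : b ≠ 1) : Out x (Meas a b 1 1 r) := by
  obtain ⟨-, -, hr, hx⟩ := h
  refine out_of_expr1 (a := a) (b := 1) (p := 1) (q := 1) (r := r)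
    ⟨gpal_one, gpal_one, hr, ?_⟩ ?_
  · rw [hx]; group
  · have : nw b ≠ 0 := fun hc => hb (nw_eq_zero.1 hc)
    simp only [Meas, nw_one]
    omega

/-- Collapse `b * b⁻¹` in a form-2 expression with trivial `q, r`. -/
theorem collapse2 {x a b p : FreeGroup α}
    (h : Expr2 x a b p 1 1) (hb : b ≠ 1) : Out x (Meas a b p 1 1) := by
  obtain ⟨hp, -, -, hx⟩ := h
  refine out_of_expr2 (a := a) (b := 1) (p := p) (q := 1) (r := 1)
    ⟨hp, gpal_one, gpal_one, ?_⟩ ?_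
  · rw [hx]; group
  · have : nw b ≠ 0 := fun hc => hb (nw_eq_zero.1 hc)
    simp only [Meas, nw_one]
    omega

/-! ### locating a cancellation -/

theorem find_junction {G H : List (α × Bool)} (hG : List.Chain' NC G)
    (hnot : ¬ List.Chain' NC (G ++ H)) :
    ¬ List.Chain' NC H ∨
      ∃ s : α, ∃ d : Bool, ∃ G₁ H₁, G = G₁ ++ [(s, d)] ∧ H = (s, !d) :: H₁ := by
  by_cases hH : List.Chain' NC H
  · right
    unfold List.Chain' at hnot
    rw [List.isChain_append] at hnot
    push_neg at hnot
    obtain ⟨u, hu, v, hv, huv⟩ := hnot hG hH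
    unfold NC at huv
    push_neg at huv
    obtain ⟨h1, h2⟩ := huv
    refine ⟨u.1, u.2, ?_⟩
    have hvu : v = (u.1, !u.2) := by
      rcases u with ⟨us, ud⟩; rcases v with ⟨vs, vd⟩
      simp only at h1 h2
      subst h1
      cases ud <;> cases vd <;> simp only at h2 ⊢ <;> first | rfl | exact absurd h2 (by simp)
    obtain ⟨G₁, hG₁⟩ := List.getLast?_eq_some_iff.1 hu
    obtain ⟨H₁, hH₁⟩ := List.head?_eq_some_iff.1 hv
    exact ⟨G₁, H₁, by rw [hG₁], by rw [hH₁, hvu]⟩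
  · left; exact hH

theorem gpal_head?_eq_getLast? {p : FreeGroup α} (hp : GPal p) :
    p.toWord.head? = p.toWord.getLast? := by
  conv_lhs => rw [← hp]
  exact List.head?_reverse

theorem toWord_rho_inv (b : FreeGroup α) :
    ((rho b)⁻¹).toWord = b.toWord.map linv := by
  rw [toWord_inv, toWord_rho, invRev_eq_reverse_map]
  rw [← List.map_reverse, List.reverse_reverse]

theorem chain_invRev_toWord (b : FreeGroup α) :
    List.Chain' NC (FreeGroup.invRev b.toWord) := by
  rw [← toWord_inv]
  exact chain_toWord b⁻¹

theorem out_mono {x : FreeGroup α} {n m : ℕ} (h : Out x n) (hnm : n ≤ m) : Out x m := by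
  rcases h with ⟨a, b, p, q, r, he, hm⟩ | ⟨a, b, p, q, r, he, hm⟩
  · exact Or.inl ⟨a, b, p, q, r, he, hm.trans_le hnm⟩
  · exact Or.inr ⟨a, b, p, q, r, he, hm.trans_le hnm⟩

/-- junction at `a` (form 1) -/
theorem stepA {x a b p q r : FreeGroup α} {s : α} {d : Bool} {G₁ H₁ : List (α × Bool)}
    (h : Expr1 x a b p q r) (hA : a.toWord = G₁ ++ [(s, d)])
    (hH : b.toWord ++ (p.toWord ++ (q.toWord ++ (FreeGroup.invRev b.toWord ++
      (r.toWord ++ a.toWord.reverse)))) = (s, !d) :: H₁) :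
    Out x (Meas a b p q r) := by
  obtain ⟨hp, hq, hr, hx⟩ := h
  have h' : Expr1 x a b p q r := ⟨hp, hq, hr, hx⟩
  cases hbw : b.toWord with
  | cons γ B' =>
    rw [hbw] at hH
    simp only [List.cons_append, List.cons.injEq] at hH
    obtain ⟨hγ, -⟩ := hH
    exact moveF1ab h' hA (by rw [hbw, hγ])
  | nil =>
    have hb1 : b = 1 := toWord_eq_nil_iff.1 hbw
    rw [hbw] at hH
    simp only [FreeGroup.invRev_empty, List.nil_append] at hH
    cases hpw : p.toWord with
    | cons γ P' =>
      rw [hpw] at hH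
      simp only [List.cons_append, List.cons.injEq] at hH
      obtain ⟨hγ, -⟩ := hH
      have hE2 : Expr2 x a 1 p q r := ⟨hp, hq, hr, by rw [hx, hb1]; group⟩
      have hout := moveF2ap hE2 hA (by rw [hpw, hγ]; rfl)
      refine out_mono hout ?_
      simp only [Meas, hb1]
      omega
    | nil =>
      have hp1 : p = 1 := toWord_eq_nil_iff.1 hpw
      rw [hpw] at hH
      simp only [List.nil_append] at hH
      cases hqw : q.toWord with
      | cons γ Q' =>
        rw [hqw] at hH
        simp only [List.cons_append, List.cons.injEq] at hH
        obtain ⟨hγ, -⟩ := hH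
        have hE2 : Expr2 x a 1 q r 1 := ⟨hq, hr, gpal_one, by rw [hx, hb1, hp1]; group⟩
        have hout := moveF2ap hE2 hA (by rw [hqw, hγ]; rfl)
        refine out_mono hout ?_
        simp only [Meas, hb1, hp1, nw_one]
        omega
      | nil =>
        have hq1 : q = 1 := toWord_eq_nil_iff.1 hqw
        rw [hqw] at hH
        simp only [List.nil_append] at hH
        cases hrw : r.toWord with
        | cons γ R' =>
          rw [hrw] at hH
          simp only [List.cons_append, List.cons.injEq] at hH
          obtain ⟨hγ, -⟩ := hH
          have hE2 : Expr2 x a 1 r 1 1 :=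
            ⟨hr, gpal_one, gpal_one, by rw [hx, hb1, hp1, hq1]; group⟩
          have hout := moveF2ap hE2 hA (by rw [hrw, hγ]; rfl)
          refine out_mono hout ?_
          simp only [Meas, hb1, hp1, hq1, nw_one]
          omega
        | nil =>
          rw [hrw] at hH
          simp only [List.nil_append] at hH
          -- hH : a.toWord.reverse = (s,!d) :: H₁, but head of reverse = last = (s,d)
          exfalso
          have h1 : a.toWord.reverse.head? = some (s, d) := by
            rw [List.head?_reverse, hA, List.getLast?_concat]
          rw [hH] at h1
          simp at h1

/-- junction at `b` (form 1) -/
theorem stepB {x a b p q r : FreeGroup α} {s : α} {d : Bool} {G₁ H₁ : List (α × Bool)}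
    (h : Expr1 x a b p q r) (hB : b.toWord = G₁ ++ [(s, d)])
    (hH : p.toWord ++ (q.toWord ++ (FreeGroup.invRev b.toWord ++
      (r.toWord ++ a.toWord.reverse))) = (s, !d) :: H₁) :
    Out x (Meas a b p q r) := by
  obtain ⟨hp, hq, hr, hx⟩ := h
  have h' : Expr1 x a b p q r := ⟨hp, hq, hr, hx⟩
  have hbne : b ≠ 1 := by
    intro hb1
    rw [hb1, toWord_one] at hB
    exact absurd hB.symm (by simp)
  cases hpw : p.toWord with
  | cons γ P' =>
    rw [hpw] at hH
    simp only [List.cons_append, List.cons.injEq] at hH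
    obtain ⟨hγ, -⟩ := hH
    exact moveF1bp h' hB (by rw [hpw, hγ]; rfl)
  | nil =>
    have hp1 : p = 1 := toWord_eq_nil_iff.1 hpw
    rw [hpw] at hH
    simp only [List.nil_append] at hH
    cases hqw : q.toWord with
    | cons γ Q' =>
      rw [hqw] at hH
      simp only [List.cons_append, List.cons.injEq] at hH
      obtain ⟨hγ, -⟩ := hH
      have hE : Expr1 x a b q 1 r := ⟨hq, gpal_one, hr, by rw [hx, hp1]; group⟩
      have hout := moveF1bp hE hB (by rw [hqw, hγ]; rfl)
      refine out_mono hout ?_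
      simp only [Meas, hp1, nw_one]
      omega
    | nil =>
      have hq1 : q = 1 := toWord_eq_nil_iff.1 hqw
      have hE : Expr1 x a b 1 1 r := ⟨gpal_one, gpal_one, hr, by rw [hx, hp1, hq1]⟩
      have hout := collapse1 hE hbne
      refine out_mono hout ?_
      simp only [Meas, hp1, hq1, nw_one]
      omega

/-- junction at `p` (form 1) -/
theorem stepP {x a b p q r : FreeGroup α} {s : α} {d : Bool} {G₁ H₁ : List (α × Bool)}
    (h : Expr1 x a b p q r) (hP : p.toWord = G₁ ++ [(s, d)])
    (hH : q.toWord ++ (FreeGroup.invRev b.toWord ++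
      (r.toWord ++ a.toWord.reverse)) = (s, !d) :: H₁) :
    Out x (Meas a b p q r) := by
  obtain ⟨hp, hq, hr, hx⟩ := h
  have h' : Expr1 x a b p q r := ⟨hp, hq, hr, hx⟩
  have hphead : p.toWord.head? = some (s, d) := by
    rw [gpal_head?_eq_getLast? hp, hP, List.getLast?_concat]
  cases hqw : q.toWord with
  | cons γ Q' =>
    rw [hqw] at hH
    simp only [List.cons_append, List.cons.injEq] at hH
    obtain ⟨hγ, -⟩ := hH
    exact moveF1pq h' hphead (by rw [hqw, hγ]; rfl)
  | nil =>
    have hq1 : q = 1 := toWord_eq_nil_iff.1 hqw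
    rw [hqw] at hH
    simp only [List.nil_append] at hH
    cases hib : FreeGroup.invRev b.toWord with
    | cons γ IB' =>
      rw [hib] at hH
      simp only [List.cons_append, List.cons.injEq] at hH
      obtain ⟨hγ, -⟩ := hH
      -- transport to form 2 on rho x ; junction between b-slot and q-slot there
      have hE : Expr1 x a b 1 p r := ⟨gpal_one, hp, hr, by rw [hx, hq1]; group⟩
      obtain ⟨hT, hTm⟩ := expr1_to_expr2_rho hE
      have hlast : ((rho b)⁻¹).toWord.getLast? = some (s, !d) := by
        rw [toWord_rho_inv]
        have : (FreeGroup.invRev b.toWord).head? = some (s, !d) := by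
          rw [hib, hγ]; rfl
        rw [invRev_eq_reverse_map, List.head?_reverse] at this
        exact this
      obtain ⟨B₁, hB₁⟩ := List.getLast?_eq_some_iff.1 hlast
      have hout := moveF2bq hT hB₁ (by rw [hphead]; simp)
      refine out_mono (out_flip hout) ?_
      rw [hTm]
      simp only [Meas, hq1, nw_one]
      omega
    | nil =>
      have hb1 : b = 1 := by
        have := congrArg List.length hib
        rw [FreeGroup.invRev_length] at this
        exact toWord_eq_nil_iff.1 (List.length_eq_zero_iff.1 this)
      rw [hib] at hH
      simp only [List.nil_append] at hH
      cases hrw : r.toWord with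
      | cons γ R' =>
        rw [hrw] at hH
        simp only [List.cons_append, List.cons.injEq] at hH
        obtain ⟨hγ, -⟩ := hH
        have hE : Expr1 x a 1 p r 1 := ⟨hp, hr, gpal_one, by rw [hx, hq1, hb1]; group⟩
        have hout := moveF1pq hE hphead (by rw [hrw, hγ]; rfl)
        refine out_mono hout ?_
        simp only [Meas, hq1, hb1, nw_one]
        omega
      | nil =>
        have hr1 : r = 1 := toWord_eq_nil_iff.1 hrw
        rw [hrw] at hH
        simp only [List.nil_append] at hH
        have hAlast : a.toWord.getLast? = some (s, !d) := by
          rw [← List.head?_reverse, hH]; rfl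
        obtain ⟨A₁, hA₁⟩ := List.getLast?_eq_some_iff.1 hAlast
        have hE : Expr2 (rho x) a 1 p 1 1 := by
          refine ⟨hp, gpal_one, gpal_one, ?_⟩
          rw [hx, hb1, hq1, hr1]
          simp only [rho_mul, rho_inv, rho_one, rho_rho, gpal_rho_eq hp]
          group
        have hout := moveF2ap hE hA₁ (by rw [hphead]; simp)
        refine out_mono (out_flip hout) ?_
        simp only [Meas, hb1, hq1, hr1, nw_one]
        omega

/-- junction at `q` (form 1) -/
theorem stepQ {x a b p q r : FreeGroup α} {s : α} {d : Bool} {G₁ H₁ : List (α × Bool)}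
    (h : Expr1 x a b p q r) (hQ : q.toWord = G₁ ++ [(s, d)])
    (hH : FreeGroup.invRev b.toWord ++ (r.toWord ++ a.toWord.reverse) = (s, !d) :: H₁) :
    Out x (Meas a b p q r) := by
  obtain ⟨hp, hq, hr, hx⟩ := h
  have h' : Expr1 x a b p q r := ⟨hp, hq, hr, hx⟩
  have hqhead : q.toWord.head? = some (s, d) := by
    rw [gpal_head?_eq_getLast? hq, hQ, List.getLast?_concat]
  cases hib : FreeGroup.invRev b.toWord with
  | cons γ IB' =>
    rw [hib] at hH
    simp only [List.cons_append, List.cons.injEq] at hH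
    obtain ⟨hγ, -⟩ := hH
    obtain ⟨hT, hTm⟩ := expr1_to_expr2_rho h'
    have hlast : ((rho b)⁻¹).toWord.getLast? = some (s, !d) := by
      rw [toWord_rho_inv]
      have : (FreeGroup.invRev b.toWord).head? = some (s, !d) := by
        rw [hib, hγ]; rfl
      rw [invRev_eq_reverse_map, List.head?_reverse] at this
      exact this
    obtain ⟨B₁, hB₁⟩ := List.getLast?_eq_some_iff.1 hlast
    have hout := moveF2bq hT hB₁ (by rw [hqhead]; simp)
    rw [hTm] at hout
    exact out_flip hout
  | nil =>
    have hb1 : b = 1 := by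
      have := congrArg List.length hib
      rw [FreeGroup.invRev_length] at this
      exact toWord_eq_nil_iff.1 (List.length_eq_zero_iff.1 this)
    rw [hib] at hH
    simp only [List.nil_append] at hH
    cases hrw : r.toWord with
    | cons γ R' =>
      rw [hrw] at hH
      simp only [List.cons_append, List.cons.injEq] at hH
      obtain ⟨hγ, -⟩ := hH
      have hE : Expr1 (rho x) a 1 r q p := by
        refine ⟨hr, hq, hp, ?_⟩
        rw [hx, hb1]
        simp only [rho_mul, rho_inv, rho_one, rho_rho, gpal_rho_eq hp, gpal_rho_eq hq,
          gpal_rho_eq hr]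
        group
      have hout := moveF1pq hE (by rw [hrw, hγ]; rfl) (by rw [hqhead]; simp)
      refine out_mono (out_flip hout) ?_
      simp only [Meas, hb1, nw_one]
      omega
    | nil =>
      have hr1 : r = 1 := toWord_eq_nil_iff.1 hrw
      rw [hrw] at hH
      simp only [List.nil_append] at hH
      have hAlast : a.toWord.getLast? = some (s, !d) := by
        rw [← List.head?_reverse, hH]; rfl
      obtain ⟨A₁, hA₁⟩ := List.getLast?_eq_some_iff.1 hAlast
      have hE : Expr2 (rho x) a 1 q p 1 := by
        refine ⟨hq, hp, gpal_one, ?_⟩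
        rw [hx, hb1, hr1]
        simp only [rho_mul, rho_inv, rho_one, rho_rho, gpal_rho_eq hp, gpal_rho_eq hq]
        group
      have hout := moveF2ap hE hA₁ (by rw [hqhead]; simp)
      refine out_mono (out_flip hout) ?_
      simp only [Meas, hb1, hr1, nw_one]
      omega

/-- junction at `invRev b` (form 1) -/
theorem stepIB {x a b p q r : FreeGroup α} {s : α} {d : Bool} {G₁ H₁ : List (α × Bool)}
    (h : Expr1 x a b p q r) (hIB : FreeGroup.invRev b.toWord = G₁ ++ [(s, d)])
    (hH : r.toWord ++ a.toWord.reverse = (s, !d) :: H₁) :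
    Out x (Meas a b p q r) := by
  obtain ⟨hp, hq, hr, hx⟩ := h
  have h' : Expr1 x a b p q r := ⟨hp, hq, hr, hx⟩
  have hbhead : b.toWord.head? = some (s, !d) := by
    have h1 : (FreeGroup.invRev b.toWord).getLast? = some (s, d) := by
      rw [hIB, List.getLast?_concat]
    rw [invRev_eq_reverse_map, List.getLast?_reverse, List.head?_map] at h1
    rcases hw : b.toWord.head? with - | γ
    · rw [hw] at h1; exact absurd h1 (by simp)
    · rw [hw] at h1
      have h1 : linv γ = (s, d) := by simpa using h1
      rcases γ with ⟨σ, δ⟩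
      have hσ : σ = s := by
        have := congrArg Prod.fst h1; simpa [linv] using this
      have hδ : δ = !d := by
        have := congrArg Prod.snd h1
        simp only [linv] at this
        cases δ <;> cases d <;> simp_all
      rw [hσ, hδ]
  obtain ⟨B'', hbw⟩ := List.head?_eq_some_iff.1 hbhead
  have hbslot : ((rho b)⁻¹).toWord = (s, !(!d)) :: B''.map linv := by
    rw [toWord_rho_inv, hbw]
    rfl
  cases hrw : r.toWord with
  | cons γ R' =>
    rw [hrw] at hH
    simp only [List.cons_append, List.cons.injEq] at hH
    obtain ⟨hγ, -⟩ := hH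
    obtain ⟨hT, hTm⟩ := expr1_to_expr2_rho h'
    have hout := moveF2pb hT (by rw [hrw, hγ]; rfl) hbslot
    rw [hTm] at hout
    exact out_flip hout
  | nil =>
    have hr1 : r = 1 := toWord_eq_nil_iff.1 hrw
    rw [hrw] at hH
    simp only [List.nil_append] at hH
    have hAlast : a.toWord.getLast? = some (s, !d) := by
      rw [← List.head?_reverse, hH]; rfl
    obtain ⟨A₁, hA₁⟩ := List.getLast?_eq_some_iff.1 hAlast
    have hE : Expr1 (rho x) a ((rho b)⁻¹) q p 1 := by
      refine ⟨hq, hp, gpal_one, ?_⟩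
      rw [hx, hr1]
      simp only [rho_mul, rho_inv, rho_one, rho_rho, gpal_rho_eq hp, gpal_rho_eq hq,
        inv_inv]
      group
    have hout := moveF1ab hE hA₁ hbslot
    refine out_mono (out_flip hout) ?_
    simp only [Meas, hr1, nw_one, nw_inv, nw_rho]
    omega

/-- junction at `r` (form 1) -/
theorem stepR {x a b p q r : FreeGroup α} {s : α} {d : Bool} {G₁ H₁ : List (α × Bool)}
    (h : Expr1 x a b p q r) (hR : r.toWord = G₁ ++ [(s, d)])
    (hH : a.toWord.reverse = (s, !d) :: H₁) :
    Out x (Meas a b p q r) := by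
  obtain ⟨hp, hq, hr, hx⟩ := h
  have h' : Expr1 x a b p q r := ⟨hp, hq, hr, hx⟩
  have hrhead : r.toWord.head? = some (s, d) := by
    rw [gpal_head?_eq_getLast? hr, hR, List.getLast?_concat]
  have hAlast : a.toWord.getLast? = some (s, !d) := by
    rw [← List.head?_reverse, hH]; rfl
  obtain ⟨A₁, hA₁⟩ := List.getLast?_eq_some_iff.1 hAlast
  obtain ⟨hT, hTm⟩ := expr1_to_expr2_rho h'
  have hout := moveF2ap hT hA₁ (by rw [hrhead]; simp)
  rw [hTm] at hout
  exact out_flip hout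

/-- one reduction step -/
theorem step1 {x a b p q r : FreeGroup α} (h : Expr1 x a b p q r)
    (hnc : ¬ List.Chain' NC (a.toWord ++ (b.toWord ++ (p.toWord ++ (q.toWord ++
      (FreeGroup.invRev b.toWord ++ (r.toWord ++ a.toWord.reverse))))))) :
    Out x (Meas a b p q r) := by
  rcases find_junction (chain_toWord a) hnc with hn | ⟨s, d, G₁, H₁, hA, hH⟩
  swap
  · exact stepA h hA hH
  rcases find_junction (chain_toWord b) hn with hn | ⟨s, d, G₁, H₁, hB, hH⟩
  swap
  · exact stepB h hB hH
  rcases find_junction (chain_toWord p) hn with hn | ⟨s, d, G₁, H₁, hP, hH⟩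
  swap
  · exact stepP h hP hH
  rcases find_junction (chain_toWord q) hn with hn | ⟨s, d, G₁, H₁, hQ, hH⟩
  swap
  · exact stepQ h hQ hH
  rcases find_junction (chain_invRev_toWord b) hn with hn | ⟨s, d, G₁, H₁, hIB, hH⟩
  swap
  · exact stepIB h hIB hH
  rcases find_junction (chain_toWord r) hn with hn | ⟨s, d, G₁, H₁, hR, hH⟩
  swap
  · exact stepR h hR hH
  exact absurd (chain_reverse (chain_toWord a)) hn

/-- main induction -/
theorem main : ∀ n : ℕ, ∀ x a b p q r : FreeGroup α,
    Expr1 x a b p q r → Meas a b p q r ≤ n → Goal x := by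
  intro n
  induction n using Nat.strong_induction_on with
  | _ n ih =>
    intro x a b p q r h hm
    by_cases hc : List.Chain' NC (a.toWord ++ b.toWord ++ p.toWord ++ q.toWord ++
      FreeGroup.invRev b.toWord ++ r.toWord ++ a.toWord.reverse)
    · exact finish1 h hc
    · have hc' : ¬ List.Chain' NC (a.toWord ++ (b.toWord ++ (p.toWord ++ (q.toWord ++
        (FreeGroup.invRev b.toWord ++ (r.toWord ++ a.toWord.reverse)))))) := by
        simpa [List.append_assoc] using hc
      rcases step1 h hc' with ⟨a', b', p', q', r', he, hmm⟩ | ⟨a', b', p', q', r', he, hmm⟩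
      · exact ih (Meas a' b' p' q' r') (lt_of_lt_of_le hmm hm) x a' b' p' q' r' he le_rfl
      · exact goal_rho
          (ih (Meas a' b' p' q' r') (lt_of_lt_of_le hmm hm) (rho x) a' b' p' q' r' he le_rfl)

theorem gpal_conj {p : FreeGroup α} (hp : GPal p) (c : FreeGroup α) :
    GPal (c * p * rho c) := by
  rw [gpal_iff]
  simp only [rho_mul, rho_rho, gpal_rho_eq hp]
  group

theorem gpal_conj2 {q : FreeGroup α} (hq : GPal q) (c : FreeGroup α) :
    GPal ((rho c)⁻¹ * q * c⁻¹) := by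
  rw [gpal_iff]
  simp only [rho_mul, rho_inv, rho_rho, gpal_rho_eq hq]
  group

theorem gpal_mk_of_pal {P : List (α × Bool)} (hP : _root_.Red P) (hp : Pal P) :
    GPal (mk P) := by
  unfold GPal
  rw [hP]
  exact hp

end Stmt16

open Stmt16 FreeGroup in
theorem stmt16 {α : Type*} [DecidableEq α] (x : FreeGroup α) :
    (∃ u v w : FreeGroup α, GPal u ∧ GPal v ∧ GPal w ∧ x = u * v * w) ↔
    ((∃ A B P Q R : List (α × Bool), Red A ∧ Red B ∧ Red P ∧ Red Q ∧ Red R ∧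
        Pal P ∧ Pal Q ∧ Pal R ∧
        x.toWord = A ++ B ++ P ++ Q ++ FreeGroup.invRev B ++ R ++ A.reverse) ∨
     (∃ A B P Q R : List (α × Bool), Red A ∧ Red B ∧ Red P ∧ Red Q ∧ Red R ∧
        Pal P ∧ Pal Q ∧ Pal R ∧
        x.toWord = A ++ P ++ B ++ Q ++ R ++ FreeGroup.invRev B ++ A.reverse)) := by
  constructor
  · rintro ⟨u, v, w, hu, hv, hw, hxe⟩
    have hE2 : Expr2 x 1 v u w v := ⟨hu, hw, hv, by rw [hxe, rho_one]; group⟩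
    obtain ⟨hT, -⟩ := expr2_to_expr1_rho hE2
    have hg : Goal (rho x) := main _ (rho x) _ _ _ _ _ hT le_rfl
    exact goal_rho hg
  · rintro (⟨A, B, P, Q, R, hA, hB, hP, hQ, hR, hPp, hPq, hPr, heq⟩ |
      ⟨A, B, P, Q, R, hA, hB, hP, hQ, hR, hPp, hPq, hPr, heq⟩)
    · -- form 1
      have hx : x = mk A * mk B * mk P * mk Q * (mk B)⁻¹ * mk R * rho (mk A) := by
        conv_lhs => rw [← mk_toWord (x := x), heq]
        rw [rho_mk, inv_mk]
        simp only [mul_mk, List.append_assoc]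
      refine ⟨(mk A * mk B) * mk P * rho (mk A * mk B),
        (rho (mk A * mk B))⁻¹ * mk Q * (mk A * mk B)⁻¹,
        mk A * mk R * rho (mk A), ?_, ?_, ?_, ?_⟩
      · exact gpal_conj (gpal_mk_of_pal hP hPp) _
      · exact gpal_conj2 (gpal_mk_of_pal hQ hPq) _
      · exact gpal_conj (gpal_mk_of_pal hR hPr) _
      · rw [hx]; group
    · -- form 2
      have hx : x = mk A * mk P * mk B * mk Q * mk R * (mk B)⁻¹ * rho (mk A) := by
        conv_lhs => rw [← mk_toWord (x := x), heq]
        rw [rho_mk, inv_mk]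
        simp only [mul_mk, List.append_assoc]
      refine ⟨mk A * mk P * rho (mk A),
        (rho (mk A))⁻¹ * mk B * mk Q * rho (mk B) * (mk A)⁻¹,
        mk A * (rho (mk B))⁻¹ * mk R * (mk B)⁻¹ * rho (mk A), ?_, ?_, ?_, ?_⟩
      · exact gpal_conj (gpal_mk_of_pal hP hPp) _
      · rw [gpal_iff]
        simp only [rho_mul, rho_inv, rho_rho, gpal_rho_eq (gpal_mk_of_pal hQ hPq)]
        group
      · rw [gpal_iff]
        simp only [rho_mul, rho_inv, rho_rho, gpal_rho_eq (gpal_mk_of_pal hR hPr)]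
        group
      · rw [hx]; group
end

section
/- For any palindromes P, Q, R and words A, B in the free group, A·B·P·Q·B⁻¹·R·Ā = (A·B·P·B̄·Ā)·(Ā⁻¹·B̄⁻¹·Q·B⁻¹·A⁻¹)·(A·R·Ā) holds in the free group, exhibiting the left-hand side as a product of three palindromes. -/
namespace StmtAux

variable {α : Type*} [DecidableEq α]

def negW (w : List (α × Bool)) : List (α × Bool) := w.map fun p => (p.1, !p.2)

lemma negW_negW (w : List (α × Bool)) : negW (negW w) = w := by
  simp [negW, Function.comp_def]

lemma negW_reverse (w : List (α × Bool)) : negW w.reverse = (negW w).reverse := by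
  simp [negW]

lemma invRev_eq (w : List (α × Bool)) : FreeGroup.invRev w = (negW w).reverse := by
  simp [FreeGroup.invRev, negW]

lemma reduce_negW (w : List (α × Bool)) [DecidableEq α] :
    FreeGroup.reduce (negW w) = negW (FreeGroup.reduce w) := by
  induction w with
  | nil => simp [negW]
  | cons x xs ih =>
    show FreeGroup.reduce ((x.1, !x.2) :: negW xs) = _
    rw [FreeGroup.reduce.cons, FreeGroup.reduce.cons, ih]
    cases h : FreeGroup.reduce xs with
    | nil => simp [negW]
    | cons y ys =>
      simp only [negW, List.map_cons]
      by_cases hc : x.1 = y.1 ∧ x.2 = !y.2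
      · rw [if_pos, if_pos hc]
        exact ⟨hc.1, by simp [hc.2]⟩
      · rw [if_neg, if_neg hc]
        · rfl
        · rintro ⟨h1, h2⟩
          exact hc ⟨h1, by simpa using congrArg (fun b => !b) h2⟩

lemma reduce_reverse (w : List (α × Bool)) :
    FreeGroup.reduce w.reverse = (FreeGroup.reduce w).reverse := by
  have : w.reverse = FreeGroup.invRev (negW w) := by
    rw [invRev_eq, negW_negW]
  rw [this, FreeGroup.reduce_invRev, reduce_negW, invRev_eq, negW_negW]

lemma gpal_of_pal {w : List (α × Bool)} (h : Pal w) : GPal (FreeGroup.mk w) := by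
  unfold GPal
  rw [FreeGroup.toWord_mk, ← reduce_reverse, h]

end StmtAux

theorem stmt18 {α : Type*} [DecidableEq α] (A B P Q R : List (α × Bool))
    (hA : Red A) (hB : Red B) (hP : Red P) (hQ : Red Q) (hR : Red R)
    (hPpal : Pal P) (hQpal : Pal Q) (hRpal : Pal R) :
    FreeGroup.mk A * FreeGroup.mk B * FreeGroup.mk P * FreeGroup.mk Q *
        (FreeGroup.mk B)⁻¹ * FreeGroup.mk R * FreeGroup.mk A.reverse =
      (FreeGroup.mk A * FreeGroup.mk B * FreeGroup.mk P * FreeGroup.mk B.reverse *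
          FreeGroup.mk A.reverse) *
      ((FreeGroup.mk A.reverse)⁻¹ * (FreeGroup.mk B.reverse)⁻¹ * FreeGroup.mk Q *
          (FreeGroup.mk B)⁻¹ * (FreeGroup.mk A)⁻¹) *
      (FreeGroup.mk A * FreeGroup.mk R * FreeGroup.mk A.reverse) ∧
    GPal (FreeGroup.mk A * FreeGroup.mk B * FreeGroup.mk P * FreeGroup.mk B.reverse *
        FreeGroup.mk A.reverse) ∧
    GPal ((FreeGroup.mk A.reverse)⁻¹ * (FreeGroup.mk B.reverse)⁻¹ * FreeGroup.mk Q *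
        (FreeGroup.mk B)⁻¹ * (FreeGroup.mk A)⁻¹) ∧
    GPal (FreeGroup.mk A * FreeGroup.mk R * FreeGroup.mk A.reverse) := by
  refine ⟨by group, ?_, ?_, ?_⟩
  · rw [FreeGroup.mul_mk, FreeGroup.mul_mk, FreeGroup.mul_mk, FreeGroup.mul_mk]
    apply StmtAux.gpal_of_pal
    unfold Pal
    simp only [List.reverse_append, List.reverse_reverse, List.append_assoc]
    rw [hPpal]
  · rw [FreeGroup.inv_mk, FreeGroup.inv_mk, FreeGroup.inv_mk, FreeGroup.inv_mk,
      FreeGroup.mul_mk, FreeGroup.mul_mk, FreeGroup.mul_mk, FreeGroup.mul_mk]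
    apply StmtAux.gpal_of_pal
    unfold Pal
    simp only [StmtAux.invRev_eq, ← StmtAux.negW_reverse, List.reverse_reverse,
      List.reverse_append, List.append_assoc]
    rw [hQpal]
  · rw [FreeGroup.mul_mk, FreeGroup.mul_mk]
    apply StmtAux.gpal_of_pal
    unfold Pal
    simp only [List.reverse_append, List.reverse_reverse, List.append_assoc]
    rw [hRpal]
end

section
/- In the free group on the alphabet {a₁,…,aₙ,b,c}, let A = a₁a₂⋯aₙ and w = A·b·c·Ā (a reduced word of length 2n+2). Then the palindromic length of w in the free semigroup equals 2n+2, while in the free group w is a product of 3 palindromes, namely w = (A·b·Ā)·(A·Ā)⁻¹·(A·c·Ā). -/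
/-- The word A = a₁a₂⋯aₙ over the alphabet Fin n ⊕ Fin 2 (the `aᵢ` are `Sum.inl i`,
`b = Sum.inr 0`, `c = Sum.inr 1`). -/
def Aword (n : ℕ) : List (Fin n ⊕ Fin 2) := (List.finRange n).map Sum.inl

/-- The word w = A·b·c·Ā. -/
def wWord (n : ℕ) : List (Fin n ⊕ Fin 2) :=
  Aword n ++ [Sum.inr 0, Sum.inr 1] ++ (Aword n).reverse

/-- Interpret a word over the alphabet as a word over Σ ∪ Σ⁻¹ all of whose letters
are positive. -/
def pos {α : Type*} (l : List α) : List (α × Bool) := l.map (fun a => (a, true))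

/- ### Auxiliary lemmas -/

lemma reduce_pos {α : Type*} [DecidableEq α] (l : List α) :
    FreeGroup.reduce (pos l) = pos l := by
  induction l with
  | nil => rfl
  | cons a l ih =>
    show FreeGroup.reduce ((a, true) :: pos l) = _
    rw [FreeGroup.reduce.cons, ih]
    cases l with
    | nil => rfl
    | cons b l' => simp [pos]

lemma red_pos {α : Type*} [DecidableEq α] (l : List α) : Red (pos l) := by
  unfold Red
  rw [FreeGroup.toWord_mk, reduce_pos]

lemma gpal_pos {α : Type*} [DecidableEq α] {l : List α} (h : l.reverse = l) :
    GPal (FreeGroup.mk (pos l)) := by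
  unfold GPal
  rw [FreeGroup.toWord_mk, reduce_pos]
  unfold pos
  rw [← List.map_reverse, h]

lemma pos_append {α : Type*} (u v : List α) : pos (u ++ v) = pos u ++ pos v :=
  List.map_append

lemma Aword_length (n : ℕ) : (Aword n).length = n := by simp [Aword]

lemma wWord_length (n : ℕ) : (wWord n).length = 2 * n + 2 := by
  simp [wWord, Aword_length]; omega

lemma nodup_straddle {α : Type*} {P Q : List α} (hP : P.Nodup) (hQ : Q.Nodup)
    (i k : ℕ) (hk : 1 ≤ k) (hik : i + k < (P ++ Q).length)
    (he : (P ++ Q)[i]? = (P ++ Q)[i + k]?) : i < P.length ∧ P.length ≤ i + k := by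
  rw [List.length_append] at hik
  by_contra hc
  push_neg at hc
  rcases lt_or_ge i P.length with h1 | h1
  · have h2 : i + k < P.length := hc h1
    rw [List.getElem?_append_left h1, List.getElem?_append_left h2,
      List.getElem?_eq_getElem h1, List.getElem?_eq_getElem h2] at he
    have := hP.getElem_inj_iff.mp (Option.some_injective _ he)
    omega
  · rw [List.getElem?_append_right h1, List.getElem?_append_right (by omega),
      List.getElem?_eq_getElem (show i - P.length < Q.length by omega),
      List.getElem?_eq_getElem (show i + k - P.length < Q.length by omega)] at he
    have := hQ.getElem_inj_iff.mp (Option.some_injective _ he)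
    omega

lemma w_get (n j : ℕ) (hj : j < 2 * n + 2) :
    (wWord n)[j]? = some (if h : j < n then Sum.inl ⟨j, h⟩ else if _ : j = n then Sum.inr 0
      else if _ : j = n + 1 then Sum.inr 1 else Sum.inl ⟨2 * n + 1 - j, by omega⟩) := by
  have hA : (Aword n).length = n := Aword_length n
  unfold wWord
  rcases lt_or_ge j n with h1 | h1
  · rw [List.getElem?_append_left (by simp [hA]; omega),
      List.getElem?_append_left (by omega)]
    simp [Aword, List.getElem?_eq_getElem, h1]
  · rcases lt_or_ge j (n + 2) with h2 | h2
    · rw [List.getElem?_append_left (by simp [hA]; omega),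
        List.getElem?_append_right (by omega)]
      rw [hA]
      rcases Nat.eq_or_lt_of_le h1 with h3 | h3
      · subst h3
        simp
      · have h4 : j = n + 1 := by omega
        subst h4
        have h5 : n + 1 - n = 1 := by omega
        rw [h5]
        have h6 : ¬ (n + 1 < n) := by omega
        have h7 : n + 1 ≠ n := by omega
        simp [h6, h7]
    · rw [List.getElem?_append_right (by simp [hA]; omega)]
      have hL : (Aword n ++ [Sum.inr 0, Sum.inr 1]).length = n + 2 := by simp [hA]
      rw [hL]
      rw [List.getElem?_reverse (by rw [hA]; omega), hA]
      have h3 : ¬ (j < n) := by omega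
      have h4 : j ≠ n := by omega
      have h5 : j ≠ n + 1 := by omega
      simp only [h3, h4, h5, dif_neg, if_neg, not_false_iff]
      rw [List.getElem?_eq_getElem (show n - 1 - (j - (n + 2)) < (Aword n).length by
        rw [hA]; omega)]
      simp [Aword]
      omega

/-- No two letters of `wWord n` at distance 1 or 2 are equal. -/
lemma w_no_short (n : ℕ) (hn : 1 ≤ n) {i k : ℕ} (hk : k = 1 ∨ k = 2)
    (hik : i + k < (wWord n).length)
    (he : (wWord n)[i]? = (wWord n)[i + k]?) : False := by
  have hwlen := wWord_length n
  have hw : wWord n = (Aword n ++ [Sum.inr 0]) ++ ([Sum.inr 1] ++ (Aword n).reverse) := by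
    simp [wWord]
  have hPnd : (Aword n ++ [Sum.inr 0]).Nodup := by
    simp [List.nodup_append, Aword]
    exact (List.nodup_finRange n).map Sum.inl_injective
  have hQnd : ([Sum.inr 1] ++ (Aword n).reverse : List (Fin n ⊕ Fin 2)).Nodup := by
    simp [List.nodup_append, Aword, List.nodup_reverse]
    exact (List.nodup_finRange n).map Sum.inl_injective
  have hstr := nodup_straddle hPnd hQnd i k (by omega) (by rw [← hw]; exact hik)
    (by rw [← hw]; exact he)
  have hPl : (Aword n ++ [Sum.inr 0] : List (Fin n ⊕ Fin 2)).length = n + 1 := by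
    simp [Aword_length]
  rw [hPl] at hstr
  obtain ⟨hs1, hs2⟩ := hstr
  rw [w_get n i (by omega), w_get n (i + k) (by omega)] at he
  have he' := Option.some_injective _ he
  rcases hk with rfl | rfl <;>
    split_ifs at he' <;> first | omega | simp at he' | exact absurd he' (by decide)

lemma w_no_xx (n : ℕ) (hn : 1 ≤ n) (x : Fin n ⊕ Fin 2) : ¬ ([x, x] <:+: wWord n) := by
  rintro ⟨s, t, hst⟩
  have hst' : s ++ ([x, x] ++ t) = wWord n := by rw [← hst]; simp
  have h1 : (wWord n)[s.length]? = some x := by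
    rw [← hst', List.getElem?_append_right (le_refl _)]
    simp
  have h2 : (wWord n)[s.length + 1]? = some x := by
    rw [← hst', List.getElem?_append_right (by omega)]
    have h : s.length + 1 - s.length = 1 := by omega
    rw [h]
    simp
  have hlen : s.length + 1 < (wWord n).length := by
    rw [← hst']
    simp [List.length_append]
  exact w_no_short n hn (Or.inl rfl) hlen (h1.trans h2.symm)

lemma w_no_xyx (n : ℕ) (hn : 1 ≤ n) (x y : Fin n ⊕ Fin 2) : ¬ ([x, y, x] <:+: wWord n) := by
  rintro ⟨s, t, hst⟩
  have hst' : s ++ ([x, y, x] ++ t) = wWord n := by rw [← hst]; simp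
  have h1 : (wWord n)[s.length]? = some x := by
    rw [← hst', List.getElem?_append_right (le_refl _)]
    simp
  have h2 : (wWord n)[s.length + 2]? = some x := by
    rw [← hst', List.getElem?_append_right (by omega)]
    have h : s.length + 2 - s.length = 2 := by omega
    rw [h]
    simp
  have hlen : s.length + 2 < (wWord n).length := by
    rw [← hst']
    simp [List.length_append]
  exact w_no_short n hn (Or.inr rfl) hlen (h1.trans h2.symm)

lemma pal_infix_short {α : Type*} {w : List α}
    (h1 : ∀ x, ¬ ([x, x] <:+: w)) (h2 : ∀ x y, ¬ ([x, y, x] <:+: w)) :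
    ∀ p : List α, p.Palindrome → p <:+: w → p.length ≤ 1 := by
  intro p hp
  induction hp with
  | nil => intro _; simp
  | singleton x => intro _; simp
  | @cons_concat x l hl ih =>
    intro hinf
    exfalso
    have hlinf : l <:+: (x :: (l ++ [x])) := ⟨[x], [x], by simp⟩
    have hlw : l <:+: w := hlinf.trans hinf
    have hl1 : l.length ≤ 1 := ih hlw
    cases l with
    | nil => exact h1 x (by simpa using hinf)
    | cons y l' =>
      have hl' : l' = [] := by
        rcases l' with _ | ⟨z, l''⟩
        · rfl
        · simp at hl1
      subst hl'
      exact h2 x y (by simpa using hinf)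

lemma palLen_w (n : ℕ) (hn : 1 ≤ n) : palLen (wWord n) = 2 * n + 2 := by
  have hmem : 2 * n + 2 ∈ {k | ∃ l : List (List (Fin n ⊕ Fin 2)),
      l.length = k ∧ (∀ p ∈ l, Pal p) ∧ l.flatten = wWord n} := by
    refine ⟨(wWord n).map (fun a => [a]), ?_, ?_, ?_⟩
    · rw [List.length_map, wWord_length]
    · intro p hp
      rw [List.mem_map] at hp
      obtain ⟨a, _, rfl⟩ := hp
      rfl
    · induction (wWord n) with
      | nil => rfl
      | cons a l ih => simp [ih]
  have hlb : ∀ k ∈ {k | ∃ l : List (List (Fin n ⊕ Fin 2)),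
      l.length = k ∧ (∀ p ∈ l, Pal p) ∧ l.flatten = wWord n}, 2 * n + 2 ≤ k := by
    rintro k ⟨l, hlen, hpal, hflat⟩
    have hshort : ∀ p ∈ l, p.length ≤ 1 := by
      intro p hp
      have hinf : p <:+: wWord n := hflat ▸ List.infix_of_mem_flatten hp
      exact pal_infix_short (w_no_xx n hn) (w_no_xyx n hn) p
        (List.Palindrome.of_reverse_eq (hpal p hp)) hinf
    have hle : (wWord n).length ≤ l.length := by
      rw [← hflat, List.length_flatten]
      calc (l.map List.length).sum ≤ (l.map List.length).length • 1 :=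
            List.sum_le_card_nsmul _ 1 (by
              intro x hx
              rw [List.mem_map] at hx
              obtain ⟨p, hp, rfl⟩ := hx
              exact hshort p hp)
        _ = l.length := by simp
    rw [wWord_length] at hle
    omega
  exact le_antisymm (Nat.sInf_le hmem) (le_csInf ⟨_, hmem⟩ hlb)

theorem stmt19 (n : ℕ) (hn : 1 ≤ n) :
    Red (pos (wWord n)) ∧ (wWord n).length = 2 * n + 2 ∧
    palLen (wWord n) = 2 * n + 2 ∧
    FreeGroup.mk (pos (wWord n)) =
      FreeGroup.mk (pos (Aword n ++ [Sum.inr 0] ++ (Aword n).reverse)) *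
        (FreeGroup.mk (pos (Aword n ++ (Aword n).reverse)))⁻¹ *
        FreeGroup.mk (pos (Aword n ++ [Sum.inr 1] ++ (Aword n).reverse)) ∧
    GPal (FreeGroup.mk (pos (Aword n ++ [Sum.inr 0] ++ (Aword n).reverse))) ∧
    GPal (FreeGroup.mk (pos (Aword n ++ (Aword n).reverse))) ∧
    GPal (FreeGroup.mk (pos (Aword n ++ [Sum.inr 1] ++ (Aword n).reverse))) := by
  refine ⟨red_pos _, wWord_length n, palLen_w n hn, ?_, ?_, ?_, ?_⟩
  · have hw : wWord n = Aword n ++ [Sum.inr 0] ++ [Sum.inr 1] ++ (Aword n).reverse := by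
      simp [wWord]
    rw [hw]
    simp only [pos_append, ← FreeGroup.mul_mk]
    group
  · exact gpal_pos (by simp)
  · exact gpal_pos (by simp)
  · exact gpal_pos (by simp)
end
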